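/- arXiv:math/0611783 — 6 statements merged into one kernel-verified Lean document; each statement's English description precedes it below -/
import Mathlib

section
/- Let P = ({θ_i}_{i=0}^d; {θ*_i}_{i=0}^d; {φ_i}_{i=1}^d; {ϕ_i}_{i=1}^d) be a parameter array of diameter d over a field K. Then each of the following seven sequences is also a parameter array of diameter d over K: ({θ_i}; {θ*_{d−i}}; {ϕ_{d−i+1}}; {φ_{d−i+1}}); ({θ_{d−i}}; {θ*_i}; {ϕ_i}; {φ_i}); ({θ_{d−i}}; {θ*_{d−i}}; {φ_{d−i+1}}; {ϕ_{d−i+1}}); ({θ*_i}; {θ_i}; {φ_i}; {ϕ_{d−i+1}}); ({θ*_{d−i}}; {θ_i}; {ϕ_{d−i+1}}; {φ_i}); ({θ*_i}; {θ_{d−i}}; {ϕ_i}; {φ_{d−i+1}}); ({θ*_{d−i}}; {θ_{d−i}}; {φ_{d−i+1}}; {ϕ_i}). (These are the parameter arrays of the relatives of a Leonard system under the dihedral group D_4 generated by ↓, ⇓, *.) -/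
/-- A parameter array of diameter `d` over a field `K`:
conditions (PA1)–(PA5) of Terwilliger's classification of Leonard systems. -/
def IsParamArray (K : Type*) [Field K] (d : ℕ) (θ θs φ ϕ : ℕ → K) : Prop :=
  -- (PA1)
  (∀ i, 1 ≤ i → i ≤ d → φ i ≠ 0 ∧ ϕ i ≠ 0) ∧
  -- (PA2)
  (∀ i j, i ≤ d → j ≤ d → i ≠ j → θ i ≠ θ j ∧ θs i ≠ θs j) ∧
  -- (PA3)
  (∀ i, 1 ≤ i → i ≤ d →
    φ i = ϕ 1 * (∑ h ∈ Finset.range i, (θ h - θ (d - h)) / (θ 0 - θ d))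
      + (θs i - θs 0) * (θ (i - 1) - θ d)) ∧
  -- (PA4)
  (∀ i, 1 ≤ i → i ≤ d →
    ϕ i = φ 1 * (∑ h ∈ Finset.range i, (θ h - θ (d - h)) / (θ 0 - θ d))
      + (θs i - θs 0) * (θ (d - i + 1) - θ 0)) ∧
  -- (PA5)
  (∀ i j, 2 ≤ i → i ≤ d - 1 → 2 ≤ j → j ≤ d - 1 →
    (θ (i - 2) - θ (i + 1)) / (θ (i - 1) - θ i)
      = (θs (i - 2) - θs (i + 1)) / (θs (i - 1) - θs i) ∧
    (θ (i - 2) - θ (i + 1)) / (θ (i - 1) - θ i)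
      = (θ (j - 2) - θ (j + 1)) / (θ (j - 1) - θ j))

/-!
By (PA5), `θ` and `θs` are β-recurrent for one and the same `β`, so their difference sequences
`θ k - θ (k + 1)` and `θs k - θs (k + 1)` solve the recurrence `u (k + 2) = β u (k + 1) - u k`.
Their Casoratian is therefore constant, and each mixed determinant of two differences is that
constant times a Lucas number `U_n(β, 1)`. Summing these determinants over suitable ranges gives
the two identities behind the relative `P^*`: the quantities `ϑ_i` are the same for `θ` and `θs`,
and `(ϕ_d - ϕ_1) ϑ_i` equals the cross term by which (PA3) for `P^*` differs from (PA3) for `P`.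
The relative `P^⇓` only reindexes `θ`, and `⇓` and `*` generate the other relatives.
-/

open Finset

section Recurrence

variable {R : Type*} [CommRing R]

/-- The Lucas sequence `U_n(β, 1)`, that is `(Polynomial.Chebyshev.S R (n - 1)).eval β`. -/
def lucasU (β : R) : ℕ → R
  | 0 => 0
  | 1 => 1
  | n + 2 => β * lucasU β (n + 1) - lucasU β n

def lucasUSum (β : R) (n : ℕ) : R := ∑ m ∈ range n, lucasU β m

/-- Terwilliger's `θ_{i-2} - θ_{i+1} = (β + 1) (θ_{i-1} - θ_i)` for `2 ≤ i ≤ d - 1`,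
written with `k = i - 2`. -/
def IsBetaRecurrent (β : R) (d : ℕ) (θ : ℕ → R) : Prop :=
  ∀ k, k + 3 ≤ d → θ k - θ (k + 3) = (β + 1) * (θ (k + 1) - θ (k + 2))

def casoratian (x y : ℕ → R) (k l : ℕ) : R :=
  (x k - x (k + 1)) * (y l - y (l + 1)) - (x l - x (l + 1)) * (y k - y (k + 1))

lemma isBetaRecurrent_lucasUSum (β : R) (d : ℕ) : IsBetaRecurrent β d (lucasUSum β) := by
  intro k _
  simp only [lucasUSum, sum_range_succ, lucasU]
  ring

namespace IsBetaRecurrent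

variable {β : R} {d : ℕ} {x y : ℕ → R}

lemma sub_add_two_eq (hx : IsBetaRecurrent β d x) {k : ℕ} (hk : k + 3 ≤ d) :
    x (k + 2) - x (k + 3) = β * (x (k + 1) - x (k + 2)) - (x k - x (k + 1)) := by
  linear_combination hx k hk

lemma casoratian_succ (hx : IsBetaRecurrent β d x) (hy : IsBetaRecurrent β d y) :
    ∀ k, k + 2 ≤ d → casoratian x y k (k + 1) = casoratian x y 0 1
  | 0, _ => rfl
  | k + 1, hk => by
    rw [← casoratian_succ hx hy k (by omega)]
    unfold casoratian
    linear_combination (x (k + 1) - x (k + 2)) * hy.sub_add_two_eq hk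
      - (y (k + 1) - y (k + 2)) * hx.sub_add_two_eq hk

lemma casoratian_add (hx : IsBetaRecurrent β d x) (hy : IsBetaRecurrent β d y) :
    ∀ m k, k + m + 1 ≤ d → casoratian x y k (k + m) = casoratian x y 0 1 * lucasU β m
  | 0, k, _ => by simp [casoratian, lucasU]
  | 1, k, hk => by rw [casoratian_succ hx hy k hk, lucasU, mul_one]
  | m + 2, k, hk => by
    have h₀ := casoratian_add hx hy m k (by omega)
    have h₁ := casoratian_add hx hy (m + 1) k (by omega)
    have hx' := hx.sub_add_two_eq (k := k + m) (by omega)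
    have hy' := hy.sub_add_two_eq (k := k + m) (by omega)
    simp only [casoratian, lucasU, ← add_assoc] at *
    linear_combination β * h₁ - h₀ + (x k - x (k + 1)) * hy' - (y k - y (k + 1)) * hx'

lemma casoratian_sum_upper (hx : IsBetaRecurrent β d x) (hy : IsBetaRecurrent β d y) :
    ∀ m k, k + m ≤ d →
      (x k - x (k + 1)) * (y k - y (k + m)) - (y k - y (k + 1)) * (x k - x (k + m))
      = casoratian x y 0 1 * lucasUSum β m
  | 0, k, _ => by simp [lucasUSum]
  | m + 1, k, hk => by
    have ih := casoratian_sum_upper hx hy m k (by omega)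
    have hc := hx.casoratian_add hy m k hk
    simp only [casoratian, lucasUSum, sum_range_succ, ← add_assoc] at *
    linear_combination ih + hc

lemma casoratian_sum_lower (hx : IsBetaRecurrent β d x) (hy : IsBetaRecurrent β d y) :
    ∀ m i, i + m + 1 ≤ d →
      (x (i + m) - x (i + m + 1)) * (y i - y (i + m + 1))
        - (y (i + m) - y (i + m + 1)) * (x i - x (i + m + 1))
      = -(casoratian x y 0 1 * lucasUSum β (m + 1))
  | 0, i, _ => by simp [lucasUSum, lucasU]; ring
  | m + 1, i, hk => by
    have ih := casoratian_sum_lower hx hy m (i + 1) (by omega)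
    have hc := hx.casoratian_add hy (m + 1) i hk
    rw [show i + 1 + m = i + (m + 1) by omega] at ih
    simp only [casoratian, lucasUSum, sum_range_succ (n := m + 1), ← add_assoc] at *
    linear_combination ih - hc

lemma casoratian_sum_total (hx : IsBetaRecurrent β d x) (hy : IsBetaRecurrent β d y) {k : ℕ}
    (hk : k + 1 ≤ d) :
    (x k - x (k + 1)) * (y 0 - y d) - (y k - y (k + 1)) * (x 0 - x d)
      = casoratian x y 0 1 * (lucasUSum β (d - k) - lucasUSum β (k + 1)) := by
  have hu := hx.casoratian_sum_upper hy (d - k) k (by omega)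
  have hl := hx.casoratian_sum_lower hy k 0 (by omega)
  rw [show k + (d - k) = d by omega] at hu
  rw [zero_add] at hl
  linear_combination hu + hl

lemma sub_reflect_mul_eq (hx : IsBetaRecurrent β d x) (hy : IsBetaRecurrent β d y) :
    ∀ h, h ≤ d → (x h - x (d - h)) * (y 0 - y d) = (y h - y (d - h)) * (x 0 - x d)
  | 0, _ => by rw [Nat.sub_zero]; ring
  | h + 1, hh => by
    have ih := sub_reflect_mul_eq hx hy h (by omega)
    obtain ⟨e, rfl⟩ : ∃ e, d = h + 1 + e := ⟨d - (h + 1), by omega⟩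
    have hh' := hx.casoratian_sum_total hy (k := h) (by omega)
    have he := hx.casoratian_sum_total hy (k := e) (by omega)
    rw [show h + 1 + e - h = e + 1 by omega] at ih hh'
    rw [show h + 1 + e - e = h + 1 by omega] at he
    rw [show h + 1 + e - (h + 1) = e by omega]
    linear_combination ih - hh' - he

lemma casoratian_sum_double (hx : IsBetaRecurrent β d x) (hy : IsBetaRecurrent β d y) :
    ∀ j, j + 1 ≤ d → (y (j + 1) - y 0) * (x j - x d) - (x (j + 1) - x 0) * (y j - y d)
      = casoratian x y 0 1 * ∑ h ∈ range (j + 1), (lucasUSum β (d - h) - lucasUSum β h)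
  | 0, _ => by
    have hu := hx.casoratian_sum_upper hy d 0 (by omega)
    simp only [zero_add, sum_range_one, Nat.sub_zero, lucasUSum, sum_range_zero] at *
    linear_combination hu
  | j + 1, hj => by
    have ih := casoratian_sum_double hx hy j (by omega)
    have hu := hx.casoratian_sum_upper hy (d - (j + 1)) (j + 1) (by omega)
    have hl := hx.casoratian_sum_lower hy j 0 (by omega)
    rw [show j + 1 + (d - (j + 1)) = d by omega] at hu
    rw [zero_add] at hl
    rw [sum_range_succ]
    linear_combination ih + hu + hl

end IsBetaRecurrent
end Recurrence

lemma sum_range_sub_reflect {M : Type*} [AddCommGroup M] (θ : ℕ → M) {d : ℕ} :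
    ∀ n, n ≤ d + 1 → ∑ h ∈ range n, (θ h - θ (d - h))
      = ∑ h ∈ range n, θ h + ∑ h ∈ range (d + 1 - n), θ h - ∑ h ∈ range (d + 1), θ h
  | 0, _ => by simp
  | n + 1, hn => by
    rw [sum_range_succ, sum_range_succ, sum_range_sub_reflect θ n (by omega),
      show d + 1 - n = (d - n) + 1 by omega, sum_range_succ, show d + 1 - (n + 1) = d - n by omega]
    abel

section Field

variable {K : Type*} [Field K] {d : ℕ} {θ : ℕ → K}

/-- Terwilliger's `ϑ_i`. -/
def vartheta (d : ℕ) (θ : ℕ → K) (i : ℕ) : K :=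
  ∑ h ∈ range i, (θ h - θ (d - h)) / (θ 0 - θ d)

lemma vartheta_reflect {i : ℕ} (hi : i ≤ d) : vartheta d θ (d - i + 1) = vartheta d θ i := by
  simp only [vartheta, ← sum_div]
  rw [sum_range_sub_reflect θ _ (by omega), sum_range_sub_reflect θ _ (by omega),
    show d + 1 - (d - i + 1) = i by omega, show d - i + 1 = d + 1 - i by omega,
    add_comm (∑ h ∈ range i, θ h)]

lemma vartheta_one (h : θ 0 ≠ θ d) : vartheta d θ 1 = 1 := by
  simp [vartheta, sub_ne_zero.2 h]

lemma vartheta_reverse {i : ℕ} (hi : i ≤ d + 1) :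
    vartheta d (fun j => θ (d - j)) i = vartheta d θ i := by
  refine sum_congr rfl fun h hh => ?_
  rw [mem_range] at hh
  dsimp only
  rw [show d - (d - h) = h by omega, Nat.sub_zero, Nat.sub_self, ← neg_sub (θ h),
    ← neg_sub (θ 0), neg_div_neg_eq]

def threeTermRatio (θ : ℕ → K) (i : ℕ) : K := (θ (i - 2) - θ (i + 1)) / (θ (i - 1) - θ i)

lemma threeTermRatio_reverse {i : ℕ} (hi : 2 ≤ i) (hid : i ≤ d - 1) :
    threeTermRatio (fun j => θ (d - j)) i = threeTermRatio θ (d + 1 - i) := by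
  simp only [threeTermRatio]
  rw [show d - (i - 2) = d + 1 - i + 1 by omega, show d - (i + 1) = d + 1 - i - 2 by omega,
    show d - (i - 1) = d + 1 - i by omega, show d - i = d + 1 - i - 1 by omega,
    ← neg_sub (θ (d + 1 - i - 2)), ← neg_sub (θ (d + 1 - i - 1)), neg_div_neg_eq]

namespace IsBetaRecurrent

variable {β : K} {x y : ℕ → K}

lemma vartheta_eq (hx : IsBetaRecurrent β d x) (hy : IsBetaRecurrent β d y) (hx0 : x 0 ≠ x d)
    (hy0 : y 0 ≠ y d) {i : ℕ} (hi : i ≤ d) : vartheta d y i = vartheta d x i := by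
  refine sum_congr rfl fun h hh => ?_
  rw [div_eq_div_iff (sub_ne_zero.2 hy0) (sub_ne_zero.2 hx0)]
  exact (hx.sub_reflect_mul_eq hy h (by rw [mem_range] at hh; omega)).symm

lemma mul_vartheta (hx : IsBetaRecurrent β d x) (hy : IsBetaRecurrent β d y) (hx0 : x 0 ≠ x d)
    {i : ℕ} (hi : 1 ≤ i) (hid : i ≤ d) :
    ((x 0 - x 1) * (y 0 - y d) - (y 0 - y 1) * (x 0 - x d)) * vartheta d x i
      = (y i - y 0) * (x (i - 1) - x d) - (x i - x 0) * (y (i - 1) - y d) := by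
  obtain ⟨j, rfl⟩ : ∃ j, i = j + 1 := ⟨i - 1, by omega⟩
  have hκ := hx.casoratian_sum_upper hy d 0 (by omega)
  have hR := hx.casoratian_sum_double hy j hid
  have hG : lucasUSum β d * ∑ h ∈ range (j + 1), (x h - x (d - h))
      = (x 0 - x d) * ∑ h ∈ range (j + 1), (lucasUSum β (d - h) - lucasUSum β h) := by
    rw [mul_sum, mul_sum]
    refine sum_congr rfl fun h hh => ?_
    -- compare `x` with the β-recurrent sequence `lucasUSum β`, which vanishes at `0`
    have := hx.sub_reflect_mul_eq (isBetaRecurrent_lucasUSum β d) h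
      (by rw [mem_range] at hh; omega)
    rw [show lucasUSum β 0 = 0 from sum_range_zero _] at this
    linear_combination -this
  simp only [zero_add] at hκ
  rw [Nat.add_sub_cancel, hR, vartheta, ← sum_div, hκ, mul_assoc, ← mul_div_assoc, hG,
    mul_div_cancel_left₀ _ (sub_ne_zero.2 hx0)]

end IsBetaRecurrent
end Field


namespace IsParamArray

variable {K : Type*} [Field K] {d : ℕ} {θ θs φ ϕ : ℕ → K}

lemma threeTermRatio_eq (h : IsParamArray K d θ θs φ ϕ) {i : ℕ} (hi : 2 ≤ i)
    (hid : i ≤ d - 1) :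
    threeTermRatio θ i = threeTermRatio θ 2 ∧ threeTermRatio θs i = threeTermRatio θ 2 :=
  let ⟨hs, h2⟩ := h.2.2.2.2 i 2 hi hid le_rfl (by omega)
  ⟨h2, hs.symm.trans h2⟩

lemma isBetaRecurrent (h : IsParamArray K d θ θs φ ϕ) :
    IsBetaRecurrent (threeTermRatio θ 2 - 1) d θ ∧
      IsBetaRecurrent (threeTermRatio θ 2 - 1) d θs := by
  have key : ∀ u : ℕ → K, (∀ k, k + 3 ≤ d → u (k + 1) ≠ u (k + 2)) →
      (∀ k, k + 3 ≤ d → threeTermRatio u (k + 2) = threeTermRatio θ 2) →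
      IsBetaRecurrent (threeTermRatio θ 2 - 1) d u := by
    intro u hne hr k hk
    have hrk : threeTermRatio u (k + 2) = (u k - u (k + 3)) / (u (k + 1) - u (k + 2)) := rfl
    rw [sub_add_cancel, ← hr k hk, hrk, div_mul_cancel₀ _ (sub_ne_zero.2 (hne k hk))]
  exact ⟨key θ (fun k hk => (h.2.1 _ _ (by omega) (by omega) (by omega)).1)
      (fun k hk => (h.threeTermRatio_eq (by omega) (by omega)).1),
    key θs (fun k hk => (h.2.1 _ _ (by omega) (by omega) (by omega)).2)
      (fun k hk => (h.threeTermRatio_eq (by omega) (by omega)).2)⟩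

theorem reverse_theta (h : IsParamArray K d θ θs φ ϕ) :
    IsParamArray K d (fun i => θ (d - i)) θs ϕ φ := by
  refine ⟨fun i hi hid => (h.1 i hi hid).symm, fun i j hi hj hij =>
    ⟨(h.2.1 (d - i) (d - j) (by omega) (by omega) (by omega)).1, (h.2.1 i j hi hj hij).2⟩,
    fun i hi hid => ?_, fun i hi hid => ?_, fun i j hi hid hj hjd => ?_⟩
  · change _ = _ * vartheta d (fun j => θ (d - j)) i + _
    dsimp only
    rw [vartheta_reverse (by omega), show d - (i - 1) = d - i + 1 by omega, Nat.sub_self]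
    exact h.2.2.2.1 i hi hid
  · change _ = _ * vartheta d (fun j => θ (d - j)) i + _
    dsimp only
    rw [vartheta_reverse (by omega), show d - (d - i + 1) = i - 1 by omega, Nat.sub_zero]
    exact h.2.2.1 i hi hid
  · change threeTermRatio (fun j => θ (d - j)) i = threeTermRatio θs i
      ∧ threeTermRatio (fun j => θ (d - j)) i = threeTermRatio (fun j => θ (d - j)) j
    rw [threeTermRatio_reverse (θ := θ) hi hid, threeTermRatio_reverse (θ := θ) hj hjd,
      (h.threeTermRatio_eq (i := d + 1 - i) (by omega) (by omega)).1,
      (h.threeTermRatio_eq (i := d + 1 - j) (by omega) (by omega)).1,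
      (h.threeTermRatio_eq hi hid).2]
    exact ⟨rfl, rfl⟩

theorem star (h : IsParamArray K d θ θs φ ϕ) (hd : 1 ≤ d) :
    IsParamArray K d θs θ φ (fun i => ϕ (d - i + 1)) := by
  obtain ⟨hθ, hθs⟩ := h.isBetaRecurrent
  have hθ0 : θ 0 ≠ θ d := (h.2.1 0 d (Nat.zero_le _) le_rfl (by omega)).1
  have hθs0 : θs 0 ≠ θs d := (h.2.1 0 d (Nat.zero_le _) le_rfl (by omega)).2
  have hϕ : ϕ d = ϕ 1 + ((θ 0 - θ 1) * (θs 0 - θs d) - (θs 0 - θs 1) * (θ 0 - θ d)) := by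
    have h4d : ϕ d = φ 1 * vartheta d θ d + (θs d - θs 0) * (θ (d - d + 1) - θ 0) :=
      h.2.2.2.1 d hd le_rfl
    have h41 : ϕ 1 = φ 1 * vartheta d θ 1 + (θs 1 - θs 0) * (θ (d - 1 + 1) - θ 0) :=
      h.2.2.2.1 1 le_rfl hd
    have hϑd : vartheta d θ d = 1 := by
      rw [← vartheta_one hθ0, ← vartheta_reflect hd, Nat.sub_add_cancel hd]
    rw [hϑd, Nat.sub_self, zero_add] at h4d
    rw [vartheta_one hθ0, Nat.sub_add_cancel hd] at h41
    linear_combination h4d - h41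
  refine ⟨fun i hi hid => ⟨(h.1 i hi hid).1, (h.1 (d - i + 1) (by omega) (by omega)).2⟩,
    fun i j hi hj hij => (h.2.1 i j hi hj hij).symm, fun i hi hid => ?_, fun i hi hid => ?_,
    fun i j hi hid hj hjd =>
      ⟨(h.threeTermRatio_eq hi hid).2.trans (h.threeTermRatio_eq hi hid).1.symm,
      (h.threeTermRatio_eq hi hid).2.trans (h.threeTermRatio_eq hj hjd).2.symm⟩⟩
  · change φ i = ϕ (d - 1 + 1) * vartheta d θs i + (θ i - θ 0) * (θs (i - 1) - θs d)
    have h3 : φ i = ϕ 1 * vartheta d θ i + (θs i - θs 0) * (θ (i - 1) - θ d) :=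
      h.2.2.1 i hi hid
    rw [Nat.sub_add_cancel hd, hθ.vartheta_eq hθs hθ0 hθs0 hid]
    linear_combination h3 - vartheta d θ i * hϕ - hθ.mul_vartheta hθs hθ0 hi hid
  · change ϕ (d - i + 1) = φ 1 * vartheta d θs i + (θ i - θ 0) * (θs (d - i + 1) - θs 0)
    have h4 : ϕ (d - i + 1) = φ 1 * vartheta d θ (d - i + 1)
        + (θs (d - i + 1) - θs 0) * (θ (d - (d - i + 1) + 1) - θ 0) :=
      h.2.2.2.1 _ (by omega) (by omega)
    rw [vartheta_reflect hid, show d - (d - i + 1) + 1 = i by omega] at h4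
    rw [h4, hθ.vartheta_eq hθs hθ0 hθs0 hid]
    ring

end IsParamArray

/-- The seven nontrivial relatives of a parameter array under the `D₄` action
are again parameter arrays of the same diameter. -/
theorem relatives_isParamArray {K : Type*} [Field K] (d : ℕ) (hd : 1 ≤ d)
    (θ θs φ ϕ : ℕ → K) (hPA : IsParamArray K d θ θs φ ϕ) :
    -- P^↓
    IsParamArray K d θ (fun i => θs (d - i))
      (fun i => ϕ (d - i + 1)) (fun i => φ (d - i + 1)) ∧
    -- P^⇓
    IsParamArray K d (fun i => θ (d - i)) θs ϕ φ ∧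
    -- P^↓⇓
    IsParamArray K d (fun i => θ (d - i)) (fun i => θs (d - i))
      (fun i => φ (d - i + 1)) (fun i => ϕ (d - i + 1)) ∧
    -- P^*
    IsParamArray K d θs θ φ (fun i => ϕ (d - i + 1)) ∧
    -- P^↓*
    IsParamArray K d (fun i => θs (d - i)) θ
      (fun i => ϕ (d - i + 1)) φ ∧
    -- P^⇓*
    IsParamArray K d θs (fun i => θ (d - i)) ϕ (fun i => φ (d - i + 1)) ∧
    -- P^↓⇓*
    IsParamArray K d (fun i => θs (d - i)) (fun i => θ (d - i))
      (fun i => φ (d - i + 1)) ϕ := by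
  exact ⟨(hPA.star hd).reverse_theta.star hd, hPA.reverse_theta,
    ((hPA.star hd).reverse_theta.star hd).reverse_theta, hPA.star hd, (hPA.star hd).reverse_theta,
    hPA.reverse_theta.star hd, (hPA.reverse_theta.star hd).reverse_theta⟩
end

section
/- Let ({θ_i}_{i=0}^d; {θ*_i}_{i=0}^d; {φ_i}_{i=1}^d; {ϕ_i}_{i=1}^d) be a parameter array of diameter d ≥ 1 over a field K. Then for 0 ≤ h ≤ d, (θ_h − θ_{d−h})/(θ_0 − θ_d) = (θ*_h − θ*_{d−h})/(θ*_0 − θ*_d). -/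
/-- Chebyshev-like sequence: `0, 1, β, β²-1, ...`. -/
def chebS {K : Type*} [Field K] (β : K) : ℕ → K
  | 0 => 0
  | 1 => 1
  | n+2 => β * chebS β (n+1) - chebS β n

/-- Second basis solution: `1, 0, -1, -β, ...`. -/
def chebT {K : Type*} [Field K] (β : K) : ℕ → K
  | 0 => 1
  | 1 => 0
  | n+2 => β * chebT β (n+1) - chebT β n

lemma chebS_add_two {K : Type*} [Field K] (β : K) (n : ℕ) :
    chebS β (n+2) = β * chebS β (n+1) - chebS β n := by rw [chebS]

lemma chebT_add_two {K : Type*} [Field K] (β : K) (n : ℕ) :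
    chebT β (n+2) = β * chebT β (n+1) - chebT β n := by rw [chebT]

lemma chebT_succ {K : Type*} [Field K] (β : K) : ∀ n, chebT β (n+1) = - chebS β n := by
  intro n
  induction n using Nat.strong_induction_on with
  | _ n ih =>
    match n with
    | 0 => simp [chebS, chebT]
    | 1 => simp [chebS, chebT, chebS_add_two, chebT_add_two]
    | (k+2) =>
      rw [show k+2+1 = (k+1)+2 from rfl, chebT_add_two, chebS_add_two,
        ih (k+1) (by omega), ih k (by omega)]
      ring

lemma chebS_two {K : Type*} [Field K] (β : K) : chebS β 2 = β := by
  rw [show (2:ℕ) = 0+2 from rfl, chebS_add_two]; simp [chebS]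

lemma chebS_three {K : Type*} [Field K] (β : K) : chebS β 3 = β * β - 1 := by
  rw [show (3:ℕ) = 1+2 from rfl, chebS_add_two, chebS_two]; simp [chebS]

/-- Representation of any solution of the recurrence in terms of the two basis solutions. -/
lemma cheb_rep {K : Type*} [Field K] (β : K) (u : ℕ → K) (N : ℕ)
    (hu : ∀ k, k + 2 ≤ N → u (k+2) = β * u (k+1) - u k) :
    ∀ g ≤ N, u g = u 1 * chebS β g + u 0 * chebT β g := by
  intro g
  induction g using Nat.strong_induction_on with
  | _ g ih =>
    match g with
    | 0 => intro _; simp [chebS, chebT]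
    | 1 => intro _; simp [chebS, chebT]
    | (k+2) =>
      intro hk
      rw [hu k hk, ih (k+1) (by omega) (by omega), ih k (by omega) (by omega),
        chebS_add_two, chebT_add_two]
      ring

lemma sum_chebS {K : Type*} [Field K] (β : K) :
    ∀ m, (β - 2) * (∑ i ∈ Finset.range (m+1), chebS β i)
      = chebS β (m+1) - chebS β m - 1 := by
  intro m
  induction m with
  | zero => simp [chebS]
  | succ n ih =>
    rw [Finset.sum_range_succ, show n+1+1 = n+2 from rfl, chebS_add_two]
    linear_combination ih

/-- From the local 3-term relation (PA5), `θ (m+2) - (c-1) θ (m+1) + θ m` is constant,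
hence `A h = θ h - θ (d-h)` satisfies a 2nd-order recurrence. -/
lemma A_rec {K : Type*} [Field K] (d : ℕ) (c : K) (θ : ℕ → K)
    (hrel : ∀ m, m + 3 ≤ d → θ m - θ (m+3) = c * (θ (m+1) - θ (m+2))) :
    ∀ k, k + 2 ≤ d → θ (k+2) - θ (d - (k+2))
      = (c - 1) * (θ (k+1) - θ (d - (k+1))) - (θ k - θ (d - k)) := by
  have hF : ∀ m, m + 2 ≤ d →
      θ (m+2) - (c-1) * θ (m+1) + θ m = θ 2 - (c-1) * θ 1 + θ 0 := by
    intro m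
    induction m with
    | zero => intro _; rfl
    | succ n ih =>
      intro hm
      have h1 := ih (by omega)
      have h2 := hrel n (by omega)
      linear_combination h1 - h2
  intro k hk
  have e1 : d - k = (d - (k+2)) + 2 := by omega
  have e2 : d - (k+1) = (d - (k+2)) + 1 := by omega
  rw [e1, e2]
  have hFk := hF k hk
  have hFj := hF (d - (k+2)) (by omega)
  linear_combination hFk - hFj

/-- For a parameter array of diameter `d ≥ 1`,
`(θ_h − θ_{d−h})/(θ_0 − θ_d) = (θ*_h − θ*_{d−h})/(θ*_0 − θ*_d)` for `0 ≤ h ≤ d`. -/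
theorem theta_ratio_eq {K : Type*} [Field K] (d : ℕ) (hd : 1 ≤ d)
    (θ θs φ ϕ : ℕ → K) (hPA : IsParamArray K d θ θs φ ϕ) :
    ∀ h ≤ d, (θ h - θ (d - h)) / (θ 0 - θ d) = (θs h - θs (d - h)) / (θs 0 - θs d) := by
  obtain ⟨-, hPA2, -, -, hPA5⟩ := hPA
  have hθne : ∀ i j, i ≤ d → j ≤ d → i ≠ j → θ i ≠ θ j :=
    fun i j hi hj hij => (hPA2 i j hi hj hij).1
  have hθsne : ∀ i j, i ≤ d → j ≤ d → i ≠ j → θs i ≠ θs j :=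
    fun i j hi hj hij => (hPA2 i j hi hj hij).2
  have h0d : θ 0 - θ d ≠ 0 := sub_ne_zero.mpr (hθne 0 d (by omega) le_rfl (by omega))
  have hs0d : θs 0 - θs d ≠ 0 := sub_ne_zero.mpr (hθsne 0 d (by omega) le_rfl (by omega))
  intro h hh
  by_cases hd2 : d ≤ 2
  · interval_cases d
    · interval_cases h
      · simp only [Nat.sub_zero]
        rw [div_eq_div_iff h0d hs0d]; ring
      · simp only [Nat.sub_self]
        rw [div_eq_div_iff h0d hs0d]; ring
    · interval_cases h
      · simp only [Nat.sub_zero]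
        rw [div_eq_div_iff h0d hs0d]; ring
      · norm_num
      · simp only [Nat.sub_self]
        rw [div_eq_div_iff h0d hs0d]; ring
  · have hd3 : 3 ≤ d := by omega
    -- the common value of the (PA5) ratios
    have hrel : ∀ m, m + 3 ≤ d →
        (θ m - θ (m+3) = ((θ 0 - θ 3) / (θ 1 - θ 2)) * (θ (m+1) - θ (m+2)) ∧
         θs m - θs (m+3) = ((θ 0 - θ 3) / (θ 1 - θ 2)) * (θs (m+1) - θs (m+2))) := by
      intro m hm
      obtain ⟨e1, e2⟩ := hPA5 (m+2) 2 (by omega) (by omega) (by omega) (by omega)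
      have e3 : m+2-2 = m := by omega
      have e4 : m+2-1 = m+1 := by omega
      have e5 : m+2+1 = m+3 := by omega
      rw [e3, e4, e5] at e1 e2
      norm_num at e2
      have hne : θ (m+1) - θ (m+2) ≠ 0 :=
        sub_ne_zero.mpr (hθne (m+1) (m+2) (by omega) (by omega) (by omega))
      have hnes : θs (m+1) - θs (m+2) ≠ 0 :=
        sub_ne_zero.mpr (hθsne (m+1) (m+2) (by omega) (by omega) (by omega))
      exact ⟨(div_eq_iff hne).mp e2, (div_eq_iff hnes).mp (e1.symm.trans e2)⟩
    set c : K := (θ 0 - θ 3) / (θ 1 - θ 2) with hc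
    have hAθ := A_rec d c θ (fun m hm => (hrel m hm).1)
    have hAθs := A_rec d c θs (fun m hm => (hrel m hm).2)
    set β : K := c - 1 with hβ
    -- the bilinear sequence E and its representation
    have hrepE := cheb_rep β
      (fun g => (θ g - θ (d - g)) * (θs 0 - θs d) - (θ 0 - θ d) * (θs g - θs (d - g))) d
      (by
        intro k hk
        show (θ (k+2) - θ (d - (k+2))) * (θs 0 - θs d)
            - (θ 0 - θ d) * (θs (k+2) - θs (d - (k+2)))
          = β * ((θ (k+1) - θ (d - (k+1))) * (θs 0 - θs d)
              - (θ 0 - θ d) * (θs (k+1) - θs (d - (k+1))))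
            - ((θ k - θ (d - k)) * (θs 0 - θs d) - (θ 0 - θ d) * (θs k - θs (d - k)))
        linear_combination (θs 0 - θs d) * hAθ k hk - (θ 0 - θ d) * hAθs k hk)
    have hEp : ∀ g ≤ d,
        (θ g - θ (d - g)) * (θs 0 - θs d) - (θ 0 - θ d) * (θs g - θs (d - g))
          = ((θ 1 - θ (d-1)) * (θs 0 - θs d) - (θ 0 - θ d) * (θs 1 - θs (d-1)))
            * chebS β g := by
      intro g hg
      have h1 : (θ g - θ (d - g)) * (θs 0 - θs d) - (θ 0 - θ d) * (θs g - θs (d - g))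
          = ((θ 1 - θ (d-1)) * (θs 0 - θs d) - (θ 0 - θ d) * (θs 1 - θs (d-1))) * chebS β g
            + ((θ 0 - θ (d-0)) * (θs 0 - θs d) - (θ 0 - θ d) * (θs 0 - θs (d-0)))
              * chebT β g := hrepE g hg
      rw [Nat.sub_zero] at h1
      linear_combination h1
    have hkey : ∀ g ≤ d,
        ((θ 1 - θ (d-1)) * (θs 0 - θs d) - (θ 0 - θ d) * (θs 1 - θs (d-1)))
          * (chebS β g + chebS β (d - g)) = 0 := by
      intro g hg
      have h1 := hEp g hg
      have h2 := hEp (d - g) (by omega)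
      rw [show d - (d - g) = g from by omega] at h2
      linear_combination -h1 - h2
    by_cases hE1 : (θ 1 - θ (d-1)) * (θs 0 - θs d) - (θ 0 - θ d) * (θs 1 - θs (d-1)) = 0
    · rw [div_eq_div_iff h0d hs0d]
      linear_combination hEp h hh + chebS β h * hE1
    · exfalso
      have hG : ∀ g ≤ d, chebS β g + chebS β (d - g) = 0 := by
        intro g hg
        rcases mul_eq_zero.mp (hkey g hg) with h' | h'
        · exact absurd h' hE1
        · exact h'
      have hpd : chebS β d = 0 := by
        have h' := hG 0 (by omega)
        simpa [chebS] using h'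
      have hpd1 : chebS β (d-1) = -1 := by
        have h' := hG 1 (by omega)
        have hS1 : chebS β 1 = 1 := by simp [chebS]
        rw [hS1] at h'
        linear_combination h'
      have hTd : chebT β d = 1 := by
        rw [show d = (d-1)+1 from by omega, chebT_succ, hpd1]
        norm_num
      have hrepA := cheb_rep β (fun g => θ g - θ (d - g)) d hAθ
      have hAd : θ d - θ (d - d)
          = (θ 1 - θ (d-1)) * chebS β d + (θ 0 - θ (d-0)) * chebT β d := hrepA d le_rfl
      rw [Nat.sub_self, Nat.sub_zero, hpd, hTd] at hAd
      have htwo : (2:K) = 0 := by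
        have h2' : (2:K) * (θ 0 - θ d) = 0 := by linear_combination -hAd
        rcases mul_eq_zero.mp h2' with h' | h'
        · exact h'
        · exact absurd h' h0d
      have hrepΔ := cheb_rep β (fun g => θ g - θ (g+1)) (d-1)
        (by
          intro k hk
          show θ (k+2) - θ (k+3) = β * (θ (k+1) - θ (k+2)) - (θ k - θ (k+1))
          have h2 := (hrel k (by omega)).1
          linear_combination h2 + (θ (k+2) - θ (k+1)) * hβ)
      by_cases hβ0 : β = 0
      · -- characteristic 2, β = 0 : then θ 4 = θ 0
        have hd4 : 4 ≤ d := by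
          rcases (by omega : d = 3 ∨ 4 ≤ d) with h3 | h4
          · exfalso
            subst h3
            have h5 := hG 3 le_rfl
            rw [Nat.sub_self, chebS_three, hβ0] at h5
            norm_num [chebS] at h5
          · exact h4
        have hT2 : chebT β 2 = -1 := by
          show chebT β (1+1) = -1
          rw [chebT_succ]
          simp [chebS]
        have hT3 : chebT β 3 = -β := by
          show chebT β (2+1) = -β
          rw [chebT_succ, chebS_two]
        have hΔ2 : θ 2 - θ 3 = (θ 1 - θ 2) * chebS β 2 + (θ 0 - θ 1) * chebT β 2 :=
          hrepΔ 2 (by omega)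
        have hΔ3 : θ 3 - θ 4 = (θ 1 - θ 2) * chebS β 3 + (θ 0 - θ 1) * chebT β 3 :=
          hrepΔ 3 (by omega)
        rw [chebS_two, hT2, hβ0] at hΔ2
        rw [chebS_three, hT3, hβ0] at hΔ3
        have h04 : θ 0 = θ 4 := by linear_combination hΔ2 + hΔ3
        exact hθne 0 4 (by omega) (by omega) (by omega) h04
      · -- characteristic 2, β ≠ 0 : then θ d = θ 0
        have hb2 : β - 2 = β := by rw [htwo]; ring
        have hP1 : (∑ i ∈ Finset.range d, chebS β i) = 0 := by
          have hs := sum_chebS β (d-1)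
          rw [show d-1+1 = d from by omega, hpd, hpd1, hb2] at hs
          have h1 : β * (∑ i ∈ Finset.range d, chebS β i) = 0 := by linear_combination hs
          exact (mul_eq_zero.mp h1).resolve_left hβ0
        have hpd2 : chebS β (d-2) = -β := by
          have h' := hG 2 (by omega)
          rw [chebS_two] at h'
          linear_combination h'
        have hP2 : (∑ i ∈ Finset.range (d-1), chebS β i) = 1 := by
          have hs := sum_chebS β (d-2)
          rw [show d-2+1 = d-1 from by omega, hpd1, hpd2] at hs
          have h1 : β * (∑ i ∈ Finset.range (d-1), chebS β i) = β * 1 := by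
            linear_combination hs + hb2 + (∑ i ∈ Finset.range (d-1), chebS β i) * htwo
          exact mul_left_cancel₀ hβ0 h1
        have hT : (∑ g ∈ Finset.range d, chebT β g) = 0 := by
          rw [show d = (d-1)+1 from by omega, Finset.sum_range_succ']
          simp only [chebT_succ]
          rw [Finset.sum_neg_distrib, hP2]
          simp [chebT]
        have htel : θ 0 - θ d
            = (θ 1 - θ 2) * (∑ g ∈ Finset.range d, chebS β g)
              + (θ 0 - θ 1) * (∑ g ∈ Finset.range d, chebT β g) := by
          rw [← Finset.sum_range_sub' θ d, Finset.mul_sum, Finset.mul_sum,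
            ← Finset.sum_add_distrib]
          apply Finset.sum_congr rfl
          intro g hg
          have hg' := Finset.mem_range.mp hg
          exact hrepΔ g (by omega)
        rw [hP1, hT] at htel
        exact h0d (by linear_combination htel)
end

section
/- Let ({θ_i}_{i=0}^d; {θ*_i}_{i=0}^d; {φ_i}_{i=1}^d; {ϕ_i}_{i=1}^d) be a parameter array of diameter d ≥ 1 over a field K, and for 1 ≤ i ≤ d set ϑ_i = Σ_{h=0}^{i−1}(θ_h−θ_{d−h})/(θ_0−θ_d). Then for 1 ≤ i ≤ d the following eight identities hold: φ_i = ϕ_1ϑ_i + (θ*_i−θ*_0)(θ_{i−1}−θ_d); φ_{d−i+1} = ϕ_1ϑ_i + (θ*_{d−i+1}−θ*_0)(θ_{d−i}−θ_d); φ_i = ϕ_dϑ_i + (θ_i−θ_0)(θ*_{i−1}−θ*_d); φ_{d−i+1} = ϕ_dϑ_i + (θ_{d−i+1}−θ_0)(θ*_{d−i}−θ*_d); ϕ_i = φ_1ϑ_i + (θ*_i−θ*_0)(θ_{d−i+1}−θ_0); ϕ_{d−i+1} = φ_1ϑ_i + (θ*_{d−i+1}−θ*_0)(θ_i−θ_0);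 ϕ_i = φ_dϑ_i + (θ_{d−i}−θ_d)(θ*_{i−1}−θ*_d); ϕ_{d−i+1} = φ_dϑ_i + (θ_{i−1}−θ_d)(θ*_{d−i}−θ*_d). -/
section EightIdentitiesAux

variable {K : Type*} [Field K]

/-- Auxiliary Chebyshev-like sequence: `B 0 = 1`, `B 1 = 0`,
`B (n+2) = b * B (n+1) - B n + 1`. -/
def chebB (b : K) : ℕ → K
  | 0 => 1
  | 1 => 0
  | (n+2) => b * chebB b (n+1) - chebB b n + 1

lemma chebB_zero (b : K) : chebB b 0 = 1 := rfl
lemma chebB_one (b : K) : chebB b 1 = 0 := rfl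
lemma chebB_add_two (b : K) (n : ℕ) :
    chebB b (n+2) = b * chebB b (n+1) - chebB b n + 1 := rfl
lemma chebB_two (b : K) : chebB b 2 = 0 := by
  rw [chebB_add_two, chebB_zero, chebB_one]; ring
lemma chebB_three (b : K) : chebB b 3 = 1 := by
  rw [chebB_add_two, chebB_two, chebB_one]; ring

private lemma twoStep {P : ℕ → Prop} (h0 : P 0) (h1 : P 1)
    (ih : ∀ n, P n → P (n+1) → P (n+2)) : ∀ n, P n := by
  have key : ∀ n, P n ∧ P (n+1) := by
    intro n
    induction n with
    | zero => exact ⟨h0, h1⟩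
    | succ k ihk => exact ⟨ihk.2, ih k ihk.1 ihk.2⟩
  exact fun n => (key n).1

private lemma threeStep {P : ℕ → Prop} (h0 : P 0) (h1 : P 1) (h2 : P 2)
    (ih : ∀ n, P n → P (n+1) → P (n+2) → P (n+3)) : ∀ n, P n := by
  have key : ∀ n, P n ∧ P (n+1) ∧ P (n+2) := by
    intro n
    induction n with
    | zero => exact ⟨h0, h1, h2⟩
    | succ k ihk => exact ⟨ihk.2.1, ihk.2.2, ih k ihk.1 ihk.2.1 ihk.2.2⟩
  exact fun n => (key n).1

lemma lemINV (b : K) : ∀ n, (chebB b n)^2 + (chebB b (n+1))^2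
    - b * chebB b n * chebB b (n+1) - chebB b n - chebB b (n+1) = 0 := by
  intro n
  induction n with
  | zero => rw [chebB_zero, chebB_one]; ring
  | succ k ihk =>
      have hr := chebB_add_two b k
      have e : k + 1 + 1 = k + 2 := by omega
      rw [e]
      linear_combination ihk + (chebB b (k+2) - chebB b k) * hr

lemma lemEL (b : K) (n : ℕ) :
    chebB b n * chebB b (n+2) = (chebB b (n+1))^2 - chebB b (n+1) := by
  have hr := chebB_add_two b n
  linear_combination (chebB b n) * hr - lemINV b n

lemma lemMIX1 (b : K) (d : ℕ) : ∀ i j : ℕ, i + j = d →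
    chebB b d * (chebB b (i+2) - chebB b (i+1)) - chebB b (d+1) * (chebB b (i+1) - chebB b i)
      = chebB b (j+1) - chebB b (i+1) := by
  refine twoStep ?_ ?_ ?_
  · intro j hj
    subst hj
    rw [chebB_two, chebB_one, chebB_zero]
    ring
  · intro j hj
    have hd : d = j + 1 := by omega
    subst hd
    rw [chebB_three, chebB_two, chebB_one,
      show j + 1 + 1 = j + 2 from by omega]
    ring
  · intro n ih0 ih1 j hj
    have h1 := ih0 (j+2) (by omega)
    have h2 := ih1 (j+1) (by omega)
    simp only [show j+2+1 = j+3 from by omega, show j+1+2 = j+3 from by omega,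
      show j+1+1 = j+2 from by omega, show n+1+2 = n+3 from by omega,
      show n+1+1 = n+2 from by omega, show n+2+2 = n+4 from by omega,
      show n+2+1 = n+3 from by omega] at h1 h2 ⊢
    have hr4 : chebB b (n+4) = b * chebB b (n+3) - chebB b (n+2) + 1 := by
      rw [show n+4 = (n+2)+2 from by omega, chebB_add_two,
        show n+2+1 = n+3 from by omega]
    have hr3 : chebB b (n+3) = b * chebB b (n+2) - chebB b (n+1) + 1 := by
      rw [show n+3 = (n+1)+2 from by omega, chebB_add_two,
        show n+1+1 = n+2 from by omega]
    have hr2 : chebB b (n+2) = b * chebB b (n+1) - chebB b n + 1 := chebB_add_two b n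
    have hrj : chebB b (j+3) = b * chebB b (j+2) - chebB b (j+1) + 1 := by
      rw [show j+3 = (j+1)+2 from by omega, chebB_add_two,
        show j+1+1 = j+2 from by omega]
    linear_combination (-1 : K) * h1 + b * h2 + chebB b d * hr4
      + (1 - chebB b d - chebB b (d+1)) * hr3 + chebB b (d+1) * hr2 - hrj

lemma lemMIX2 (b : K) (d : ℕ) : ∀ i j : ℕ, i + j = d →
    (chebB b (j+1) - chebB b (i+1)) * (chebB b d - 1)
      = chebB b (d+1) * (chebB b j - chebB b i) := by
  refine twoStep ?_ ?_ ?_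
  · intro j hj
    subst hj
    rw [chebB_one, chebB_zero]
    ring
  · intro j hj
    have hd : d = j + 1 := by omega
    subst hd
    have hinv := lemINV b j
    have hrj2 : chebB b (j+2) = b * chebB b (j+1) - chebB b j + 1 := chebB_add_two b j
    rw [chebB_two, chebB_one, show j + 1 + 1 = j + 2 from by omega]
    linear_combination hinv - chebB b j * hrj2
  · intro n ih0 ih1 j hj
    have h1 := ih0 (j+2) (by omega)
    have h2 := ih1 (j+1) (by omega)
    simp only [show j+2+1 = j+3 from by omega, show j+1+1 = j+2 from by omega,
      show n+1+1 = n+2 from by omega, show n+2+1 = n+3 from by omega] at h1 h2 ⊢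
    have hr3 : chebB b (n+3) = b * chebB b (n+2) - chebB b (n+1) + 1 := by
      rw [show n+3 = (n+1)+2 from by omega, chebB_add_two,
        show n+1+1 = n+2 from by omega]
    have hr2 : chebB b (n+2) = b * chebB b (n+1) - chebB b n + 1 := chebB_add_two b n
    have hrj : chebB b (j+3) = b * chebB b (j+2) - chebB b (j+1) + 1 := by
      rw [show j+3 = (j+1)+2 from by omega, chebB_add_two,
        show j+1+1 = j+2 from by omega]
    have hrj2 : chebB b (j+2) = b * chebB b (j+1) - chebB b j + 1 := chebB_add_two b j
    linear_combination (-1 : K) * h1 + b * h2 + (1 - chebB b d) * hr3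
      + chebB b (d+1) * hr2 + (chebB b d - 1) * hrj - chebB b (d+1) * hrj2

lemma lemJ2 (b : K) (d : ℕ) : ∀ m : ℕ, m + 1 ≤ d →
    chebB b (m+2) * (chebB b d - chebB b m)
      + (chebB b (m+1) - 1) * (chebB b (m+1) - chebB b (d+1))
    = ∑ h ∈ Finset.range (m+1), (chebB b (d-h+1) - chebB b (h+1)) := by
  intro m
  induction m with
  | zero =>
      intro _
      rw [Finset.sum_range_one]
      simp only [Nat.sub_zero]
      rw [chebB_two, chebB_one, chebB_zero]
      ring
  | succ n ih =>
      intro hm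
      have ihh := ih (by omega)
      rw [Finset.sum_range_succ, ← ihh]
      have mix := lemMIX1 b d (n+1) (d-n-1) (by omega)
      have elm := lemEL b n
      have elm1 := lemEL b (n+1)
      simp only [show d-n-1+1 = d-n from by omega, show d-(n+1)+1 = d-n from by omega,
        show n+1+2 = n+3 from by omega, show n+1+1 = n+2 from by omega] at mix elm1 ⊢
      linear_combination mix + elm - elm1

lemma lemJ1s (b : K) (d : ℕ) : ∀ m : ℕ, m + 1 ≤ d →
    (∑ h ∈ Finset.range (m+1), (chebB b (d-h+1) - chebB b (h+1))) * (chebB b d - 1)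
    = chebB b (d+1) * ∑ h ∈ Finset.range (m+1), (chebB b (d-h) - chebB b h) := by
  intro m
  induction m with
  | zero =>
      intro _
      rw [Finset.sum_range_one, Finset.sum_range_one]
      simp only [Nat.sub_zero]
      rw [chebB_one, chebB_zero]
      ring
  | succ n ih =>
      intro hm
      have ihh := ih (by omega)
      have mix2 := lemMIX2 b d (n+1) (d-n-1) (by omega)
      have hs1 := Finset.sum_range_succ (fun h => chebB b (d-h+1) - chebB b (h+1)) (n+1)
      have hs2 := Finset.sum_range_succ (fun h => chebB b (d-h) - chebB b h) (n+1)
      simp only [show d-n-1+1 = d-n from by omega, show d-(n+1)+1 = d-n from by omega,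
        show d-(n+1) = d-n-1 from by omega, show n+1+1 = n+2 from by omega] at mix2 hs1 hs2 ⊢
      linear_combination ihh + mix2 + (chebB b d - 1) * hs1 - chebB b (d+1) * hs2

lemma lemJ1 (b : K) (d : ℕ) (m : ℕ) (hm : m + 1 ≤ d) :
    (chebB b (m+2) * (chebB b d - chebB b m)
      + (chebB b (m+1) - 1) * (chebB b (m+1) - chebB b (d+1))) * (chebB b d - 1)
    = chebB b (d+1) * ∑ h ∈ Finset.range (m+1), (chebB b (d-h) - chebB b h) := by
  rw [lemJ2 b d m hm]
  exact lemJ1s b d m hm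

lemma lemCF (b : K) (d : ℕ) (η : ℕ → K)
    (hrec : ∀ p, p + 3 ≤ d → η (p+3) = η p - (b+1) * (η (p+1) - η (p+2))) :
    ∀ p, p ≤ d → η p = η 0 + (1 - chebB b p) * (η 1 - η 0) + chebB b (p+1) * (η 2 - η 1) := by
  refine threeStep ?_ ?_ ?_ ?_
  · intro _
    rw [chebB_zero, chebB_one]; ring
  · intro _
    rw [chebB_one, chebB_two]; ring
  · intro _
    rw [chebB_two, chebB_three]; ring
  · intro q ih0 ih1 ih2 hq
    rw [hrec q hq, ih0 (by omega), ih1 (by omega), ih2 (by omega)]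
    have hr2 : chebB b (q+2) = b * chebB b (q+1) - chebB b q + 1 := chebB_add_two b q
    have hr3 : chebB b (q+3) = b * chebB b (q+2) - chebB b (q+1) + 1 := by
      rw [show q+3 = (q+1)+2 from by omega, chebB_add_two, show q+1+1 = q+2 from by omega]
    have hr4 : chebB b (q+4) = b * chebB b (q+3) - chebB b (q+2) + 1 := by
      rw [show q+4 = (q+2)+2 from by omega, chebB_add_two, show q+2+1 = q+3 from by omega]
    simp only [show q+1+1 = q+2 from by omega, show q+2+1 = q+3 from by omega,
      show q+3+1 = q+4 from by omega]
    linear_combination (-(η 1 - η 0)) * hr2 + ((η 1 - η 0) + (η 2 - η 1)) * hr3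
      + (-(η 2 - η 1)) * hr4

lemma lemEcore (b : K) (d : ℕ) (η ηs : ℕ → K)
    (hη : ∀ p, p ≤ d → η p = η 0 + (1 - chebB b p) * (η 1 - η 0) + chebB b (p+1) * (η 2 - η 1))
    (hηs : ∀ p, p ≤ d → ηs p = ηs 0 + (1 - chebB b p) * (ηs 1 - ηs 0) + chebB b (p+1) * (ηs 2 - ηs 1)) :
    ∀ i, 1 ≤ i → i ≤ d →
      ((ηs i - ηs 0) * (η (i-1) - η d) - (η i - η 0) * (ηs (i-1) - ηs d)) * (η 0 - η d)
      = ((ηs d - ηs 0) * (η 1 - η 0) - (ηs 1 - ηs 0) * (η d - η 0))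
          * ∑ h ∈ Finset.range i, (η h - η (d - h)) := by
  intro i h1 hid
  obtain ⟨m, rfl⟩ : ∃ m, i = m + 1 := ⟨i - 1, by omega⟩
  have hsum : ∑ h ∈ Finset.range (m+1), (η h - η (d - h))
      = (∑ h ∈ Finset.range (m+1), (chebB b (d-h) - chebB b h)) * (η 1 - η 0)
        - (∑ h ∈ Finset.range (m+1), (chebB b (d-h+1) - chebB b (h+1))) * (η 2 - η 1) := by
    rw [Finset.sum_mul, Finset.sum_mul, ← Finset.sum_sub_distrib]
    refine Finset.sum_congr rfl ?_
    intro h hh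
    rw [Finset.mem_range] at hh
    rw [hη h (by omega), hη (d-h) (by omega)]
    ring
  simp only [Nat.add_sub_cancel] at *
  rw [hsum, hη (m+1) hid, hη m (by omega), hη d le_rfl,
    hηs (m+1) hid, hηs m (by omega), hηs d le_rfl]
  have J1 := lemJ1 b d m hid
  have J2 := lemJ2 b d m hid
  simp only [show m+1+1 = m+2 from by omega] at *
  linear_combination
    (((η 1 - η 0) * (ηs 2 - ηs 1) - (η 2 - η 1) * (ηs 1 - ηs 0)) * (η 1 - η 0)) * J1
    - (((η 1 - η 0) * (ηs 2 - ηs 1) - (η 2 - η 1) * (ηs 1 - ηs 0)) * (η 2 - η 1)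
        * chebB b (d+1)) * J2

end EightIdentitiesAux

/-- The eight identities obtained by applying the `D₄` action to (PA3),
expressed using `ϑ_i = Σ_{h=0}^{i−1}(θ_h−θ_{d−h})/(θ_0−θ_d)`. -/
theorem eight_identities {K : Type*} [Field K] (d : ℕ) (hd : 1 ≤ d)
    (θ θs φ ϕ : ℕ → K) (hPA : IsParamArray K d θ θs φ ϕ)
    (ϑ : ℕ → K)
    (hϑ : ∀ i, ϑ i = ∑ h ∈ Finset.range i, (θ h - θ (d - h)) / (θ 0 - θ d)) :
    ∀ i, 1 ≤ i → i ≤ d →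
      φ i = ϕ 1 * ϑ i + (θs i - θs 0) * (θ (i - 1) - θ d) ∧
      φ (d - i + 1) = ϕ 1 * ϑ i + (θs (d - i + 1) - θs 0) * (θ (d - i) - θ d) ∧
      φ i = ϕ d * ϑ i + (θ i - θ 0) * (θs (i - 1) - θs d) ∧
      φ (d - i + 1) = ϕ d * ϑ i + (θ (d - i + 1) - θ 0) * (θs (d - i) - θs d) ∧
      ϕ i = φ 1 * ϑ i + (θs i - θs 0) * (θ (d - i + 1) - θ 0) ∧
      ϕ (d - i + 1) = φ 1 * ϑ i + (θs (d - i + 1) - θs 0) * (θ i - θ 0) ∧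
      ϕ i = φ d * ϑ i + (θ (d - i) - θ d) * (θs (i - 1) - θs d) ∧
      ϕ (d - i + 1) = φ d * ϑ i + (θ (i - 1) - θ d) * (θs (d - i) - θs d) := by
  obtain ⟨pa1, pa2, pa3, pa4, pa5⟩ := hPA
  have hθ0d : θ 0 ≠ θ d := (pa2 0 d (by omega) le_rfl (by omega)).1
  have hne : θ 0 - θ d ≠ 0 := sub_ne_zero_of_ne hθ0d
  set b : K := (θ 0 - θ 3) / (θ 1 - θ 2) - 1 with hb
  have hb1 : b + 1 = (θ 0 - θ 3) / (θ 1 - θ 2) := by rw [hb]; ring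
  -- recurrences from PA5
  have hrecθ : ∀ p, p + 3 ≤ d → θ (p+3) = θ p - (b+1) * (θ (p+1) - θ (p+2)) := by
    intro p hp
    have h5 := pa5 (p+2) 2 (by omega) (by omega) (by omega) (by omega)
    simp only [show p+2-2 = p from by omega, show p+2-1 = p+1 from by omega,
      show p+2+1 = p+3 from by omega, show (2:ℕ)-2 = 0 from rfl,
      show (2:ℕ)-1 = 1 from rfl, show (2:ℕ)+1 = 3 from rfl] at h5
    have hne12 : θ 1 - θ 2 ≠ 0 :=
      sub_ne_zero_of_ne (pa2 1 2 (by omega) (by omega) (by omega)).1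
    have hnep : θ (p+1) - θ (p+2) ≠ 0 :=
      sub_ne_zero_of_ne (pa2 (p+1) (p+2) (by omega) (by omega) (by omega)).1
    have h52 := h5.2
    rw [div_eq_div_iff hnep hne12] at h52
    rw [hb1]
    field_simp
    linear_combination -h52
  have hrecθs : ∀ p, p + 3 ≤ d → θs (p+3) = θs p - (b+1) * (θs (p+1) - θs (p+2)) := by
    intro p hp
    have h5 := pa5 (p+2) 2 (by omega) (by omega) (by omega) (by omega)
    simp only [show p+2-2 = p from by omega, show p+2-1 = p+1 from by omega,
      show p+2+1 = p+3 from by omega, show (2:ℕ)-2 = 0 from rfl,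
      show (2:ℕ)-1 = 1 from rfl, show (2:ℕ)+1 = 3 from rfl] at h5
    have hne12 : θ 1 - θ 2 ≠ 0 :=
      sub_ne_zero_of_ne (pa2 1 2 (by omega) (by omega) (by omega)).1
    have hnep : θ (p+1) - θ (p+2) ≠ 0 :=
      sub_ne_zero_of_ne (pa2 (p+1) (p+2) (by omega) (by omega) (by omega)).1
    have hnesp : θs (p+1) - θs (p+2) ≠ 0 :=
      sub_ne_zero_of_ne (pa2 (p+1) (p+2) (by omega) (by omega) (by omega)).2
    have h51 := h5.1
    have h52 := h5.2
    rw [h51] at h52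
    rw [div_eq_div_iff hnesp hne12] at h52
    rw [hb1]
    field_simp
    linear_combination -h52
  -- ϑ machinery
  have hsum0 : ∑ h ∈ Finset.range (d+1), (θ h - θ (d - h)) = 0 := by
    have hre := Finset.sum_range_reflect (fun j => θ j) (d+1)
    simp only [Nat.add_sub_cancel] at hre
    rw [Finset.sum_sub_distrib, ← hre, sub_self]
  have hsd : ∑ h ∈ Finset.range d, (θ h - θ (d - h)) = θ 0 - θ d := by
    have hss := Finset.sum_range_succ (fun h => θ h - θ (d - h)) d
    rw [hsum0, Nat.sub_self] at hss
    linear_combination -hss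
  have hϑ1 : ϑ 1 = 1 := by
    rw [hϑ, Finset.sum_range_one, Nat.sub_zero, div_self hne]
  have hϑd : ϑ d = 1 := by
    rw [hϑ, ← Finset.sum_div, hsd, div_self hne]
  have hϑmul : ∀ i, ϑ i * (θ 0 - θ d) = ∑ h ∈ Finset.range i, (θ h - θ (d - h)) := by
    intro i
    rw [hϑ, ← Finset.sum_div, div_mul_cancel₀ _ hne]
  have hϑsym : ∀ i, 1 ≤ i → i ≤ d → ϑ (d - i + 1) = ϑ i := by
    intro i h1 hid
    have hsplit := Finset.sum_Ico_consecutive (fun h => θ h - θ (d - h))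
      (Nat.zero_le (d+1-i)) (show d+1-i ≤ d+1 by omega)
    have hi1 : ∑ h ∈ Finset.Ico (d+1-i) (d+1), (θ h - θ (d - h))
        = ∑ j ∈ Finset.range i, (θ (d+1-i+j) - θ (d - (d+1-i+j))) := by
      rw [Finset.sum_Ico_eq_sum_range]
      simp only [show d+1-(d+1-i) = i from by omega]
    have hi2 : ∑ j ∈ Finset.range i, (θ (d+1-i+j) - θ (d - (d+1-i+j)))
        = ∑ j ∈ Finset.range i, (θ (d-j) - θ (d - (d-j))) := by
      have hrefl := Finset.sum_range_reflect
        (fun j => θ (d-j) - θ (d - (d-j))) i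
      rw [← hrefl]
      refine Finset.sum_congr rfl ?_
      intro j hj
      rw [Finset.mem_range] at hj
      congr 2 <;> omega
    have hi3 : ∑ j ∈ Finset.range i, (θ (d-j) - θ (d - (d-j)))
        = - ∑ j ∈ Finset.range i, (θ j - θ (d - j)) := by
      rw [← Finset.sum_neg_distrib]
      refine Finset.sum_congr rfl ?_
      intro j hj
      rw [Finset.mem_range] at hj
      rw [show d - (d - j) = j from by omega]
      ring
    have hraw : ∑ h ∈ Finset.range (d-i+1), (θ h - θ (d - h))
        = ∑ h ∈ Finset.range i, (θ h - θ (d - h)) := by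
      have e : d - i + 1 = d + 1 - i := by omega
      rw [e]
      have h0 : ∑ h ∈ Finset.range (d+1-i), (θ h - θ (d - h))
          = ∑ h ∈ Finset.Ico 0 (d+1-i), (θ h - θ (d - h)) := by
        rw [Finset.range_eq_Ico]
      have h0' : ∑ h ∈ Finset.range (d+1), (θ h - θ (d - h))
          = ∑ h ∈ Finset.Ico 0 (d+1), (θ h - θ (d - h)) := by
        rw [Finset.range_eq_Ico]
      rw [h0]
      have := hsplit
      rw [← h0', hsum0] at this
      rw [hi1, hi2, hi3] at this
      linear_combination this
    rw [hϑ, hϑ, ← Finset.sum_div, ← Finset.sum_div, hraw]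
  -- closed forms
  have hCFθ := lemCF b d θ hrecθ
  have hCFθs := lemCF b d θs hrecθs
  have hrecθr : ∀ p, p + 3 ≤ d →
      (fun p => θ (d - p)) (p+3) = (fun p => θ (d - p)) p
        - (b+1) * ((fun p => θ (d - p)) (p+1) - (fun p => θ (d - p)) (p+2)) := by
    intro p hp
    simp only []
    have hq := hrecθ (d-p-3) (by omega)
    simp only [show d-p-3+3 = d-p from by omega, show d-p-3+1 = d-p-2 from by omega,
      show d-p-3+2 = d-p-1 from by omega] at hq
    simp only [show d-(p+3) = d-p-3 from by omega, show d-(p+1) = d-p-1 from by omega,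
      show d-(p+2) = d-p-2 from by omega]
    linear_combination -hq
  have hCFθr := lemCF b d (fun p => θ (d - p)) hrecθr
  have hE := lemEcore b d θ θs hCFθ hCFθs
  have hFr := lemEcore b d (fun p => θ (d - p)) θs hCFθr hCFθs
  -- PA3 / PA4 in ϑ-form
  have pa3' : ∀ i, 1 ≤ i → i ≤ d →
      φ i = ϕ 1 * ϑ i + (θs i - θs 0) * (θ (i-1) - θ d) := by
    intro i h1 h2
    rw [hϑ]
    exact pa3 i h1 h2
  have pa4' : ∀ i, 1 ≤ i → i ≤ d →
      ϕ i = φ 1 * ϑ i + (θs i - θs 0) * (θ (d - i + 1) - θ 0) := by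
    intro i h1 h2
    rw [hϑ]
    exact pa4 i h1 h2
  -- general identity (iii)
  have gen3 : ∀ i, 1 ≤ i → i ≤ d →
      φ i = ϕ d * ϑ i + (θ i - θ 0) * (θs (i-1) - θs d) := by
    intro i h1 hid
    have h3 := pa3' i h1 hid
    have hphi1 := pa3' 1 le_rfl hd
    simp only [show (1:ℕ)-1 = 0 from rfl] at hphi1
    have hphid := pa4' d hd le_rfl
    simp only [show d-d+1 = 1 from by omega] at hphid
    rw [hϑ1] at hphi1
    rw [hϑd] at hphid
    have hEi := hE i h1 hid
    have hEdiv : (θs i - θs 0) * (θ (i-1) - θ d) - (θ i - θ 0) * (θs (i-1) - θs d)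
        = ((θs d - θs 0) * (θ 1 - θ 0) - (θs 1 - θs 0) * (θ d - θ 0)) * ϑ i := by
      apply mul_right_cancel₀ hne
      rw [hEi, mul_assoc, hϑmul i]
    linear_combination h3 + hEdiv - ϑ i * hphid - ϑ i * hphi1
  -- general identity (vii)
  have gen7 : ∀ i, 1 ≤ i → i ≤ d →
      ϕ i = φ d * ϑ i + (θ (d - i) - θ d) * (θs (i-1) - θs d) := by
    intro i h1 hid
    have hFi := hFr i h1 hid
    simp only [show d-(i-1) = d-i+1 from by omega, Nat.sub_self, Nat.sub_zero] at hFi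
    have hsneg : ∑ h ∈ Finset.range i, (θ (d-h) - θ (d - (d-h)))
        = - ∑ h ∈ Finset.range i, (θ h - θ (d-h)) := by
      rw [← Finset.sum_neg_distrib]
      refine Finset.sum_congr rfl ?_
      intro h hh
      rw [Finset.mem_range] at hh
      rw [show d-(d-h) = h from by omega]
      ring
    rw [hsneg] at hFi
    have hFdiv : (θs i - θs 0) * (θ (d-i+1) - θ 0) - (θ (d-i) - θ d) * (θs (i-1) - θs d)
        = ((θs d - θs 0) * (θ (d-1) - θ d) - (θs 1 - θs 0) * (θ 0 - θ d)) * ϑ i := by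
      apply mul_right_cancel₀ hne
      linear_combination (-1 : K) * hFi
        - ((θs d - θs 0) * (θ (d-1) - θ d) - (θs 1 - θs 0) * (θ 0 - θ d)) * (hϑmul i)
    have h4 := pa4' i h1 hid
    have hphd := pa3' d hd le_rfl
    have hph1 := pa4' 1 le_rfl hd
    simp only [show d-1+1 = d from by omega] at hph1
    rw [hϑd] at hphd
    rw [hϑ1] at hph1
    linear_combination h4 + hFdiv - ϑ i * hphd - ϑ i * hph1
  intro i h1 hid
  refine ⟨pa3' i h1 hid, ?_, gen3 i h1 hid, ?_, pa4' i h1 hid, ?_, gen7 i h1 hid, ?_⟩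
  · have h := pa3' (d-i+1) (by omega) (by omega)
    simp only [Nat.add_sub_cancel] at h
    rwa [hϑsym i h1 hid] at h
  · have h := gen3 (d-i+1) (by omega) (by omega)
    simp only [Nat.add_sub_cancel] at h
    rwa [hϑsym i h1 hid] at h
  · have h := pa4' (d-i+1) (by omega) (by omega)
    rw [show d-(d-i+1)+1 = i from by omega] at h
    rwa [hϑsym i h1 hid] at h
  · have h := gen7 (d-i+1) (by omega) (by omega)
    simp only [Nat.add_sub_cancel, show d-(d-i+1) = i-1 from by omega] at h
    rwa [hϑsym i h1 hid] at h
end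

section
/- Let ({θ_i}_{i=0}^d; {θ*_i}_{i=0}^d; {φ_i}_{i=1}^d; {ϕ_i}_{i=1}^d) be a parameter array of diameter d ≥ 1 over a field K. The following are equivalent: (i) there exist scalars ξ, ζ, ξ*, ζ* in K with ξ, ξ* nonzero such that θ_{d−i} = ξθ_i + ζ and θ*_i = ξ*θ*_i + ζ* for 0 ≤ i ≤ d, and ϕ_i = ξξ*φ_i and φ_i = ξξ*ϕ_i for 1 ≤ i ≤ d (i.e., the relative P^⇓ is affine isomorphic to P); (ii) φ_1 = −ϕ_1 and φ_d = −ϕ_d; (iii) φ_i = −ϕ_i for 1 ≤ i ≤ d, and θ_i + θ_{d−i} is independent of i for 0 ≤ i ≤ d. Moreover, if (i)–(iii) hold, then (i) is satisfied with ξ = −1, ζ equal to the common value of θ_i + θ_{d−i}, ξ* = 1, and ζ* = 0. -/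
def sseq {K : Type*} [Field K] (β : K) : ℕ → K
  | 0 => 0
  | 1 => 1
  | (k+2) => β * sseq β (k+1) - sseq β k

theorem sseq_add_two {K : Type*} [Field K] (β : K) (k : ℕ) :
    sseq β (k+2) = β * sseq β (k+1) - sseq β k := rfl



section Core
variable {K : Type*} [Field K]

theorem phi_add_phi (d : ℕ) (hd : 1 ≤ d) (θ θs φ ϕ : ℕ → K)
    (hPA : IsParamArray K d θ θs φ ϕ) (hp1 : φ 1 = -ϕ 1) :
    ∀ i, 1 ≤ i → i ≤ d →
      φ i + ϕ i = (θs i - θs 0) * (θ (i-1) + θ (d - (i-1)) - (θ 0 + θ d)) := by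
  obtain ⟨pa1, pa2, pa3, pa4, pa5⟩ := hPA
  intro i hi1 hid
  have e3 := pa3 i hi1 hid
  have e4 := pa4 i hi1 hid
  have hidx : d - i + 1 = d - (i - 1) := by omega
  rw [hidx] at e4
  rw [e3, e4, hp1]; ring

theorem two_ne_zero_of_cond (d : ℕ) (hd : 1 ≤ d) (θ θs φ ϕ : ℕ → K)
    (hPA : IsParamArray K d θ θs φ ϕ) (hp1 : φ 1 = -ϕ 1) : (2:K) ≠ 0 := by
  obtain ⟨pa1, pa2, pa3, pa4, pa5⟩ := hPA
  have hD : θ 0 - θ d ≠ 0 :=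
    sub_ne_zero.mpr ((pa2 0 d (by omega) le_rfl (by omega)).1)
  have ha : θs 1 - θs 0 ≠ 0 :=
    sub_ne_zero.mpr ((pa2 1 0 hd (by omega) (by omega)).2)
  have e3 := pa3 1 le_rfl hd
  rw [Finset.sum_range_one, Nat.sub_zero, div_self hD] at e3
  intro h2
  have key : (θs 1 - θs 0) * (θ 0 - θ d) = -(2 * ϕ 1) := by
    rw [show (1:ℕ) - 1 = 0 from rfl] at e3
    linear_combination hp1 - e3
  have hne := mul_ne_zero ha hD
  rw [key, h2] at hne
  simp at hne

theorem theta_sum_const (d : ℕ) (hd : 1 ≤ d) (θ θs φ ϕ : ℕ → K)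
    (hPA : IsParamArray K d θ θs φ ϕ)
    (hp1 : φ 1 = -ϕ 1) (hpd : φ d = -ϕ d) :
    ∀ i ≤ d, θ i + θ (d - i) = θ 0 + θ d := by
  have h2K := two_ne_zero_of_cond d hd θ θs φ ϕ hPA hp1
  have hsum := phi_add_phi d hd θ θs φ ϕ hPA hp1
  obtain ⟨pa1, pa2, pa3, pa4, pa5⟩ := hPA
  -- u_1 = 0
  have hu1 : θ 1 + θ (d - 1) = θ 0 + θ d := by
    rcases eq_or_lt_of_le hd with h | h
    · rw [← h, show (1:ℕ) - 1 = 0 from rfl]; ring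
    · have hs := hsum d hd le_rfl
      have hdd1 : d - (d-1) = 1 := by omega
      rw [hdd1] at hs
      have hne : θs d - θs 0 ≠ 0 :=
        sub_ne_zero.mpr ((pa2 d 0 le_rfl (by omega) (by omega)).2)
      have h0 : (θs d - θs 0) * (θ (d-1) + θ 1 - (θ 0 + θ d)) = 0 := by
        rw [← hs, hpd]; ring
      have h0' := (mul_eq_zero.mp h0).resolve_left hne
      linear_combination h0'
  by_cases hd3 : d ≤ 3
  · intro i hi
    have h4 : d = 1 ∨ d = 2 ∨ d = 3 := by omega
    rcases h4 with rfl | rfl | rfl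
    · have h1 : i = 0 ∨ i = 1 := by omega
      rcases h1 with rfl | rfl
      · norm_num
      · norm_num; ring
    · have h1 : i = 0 ∨ i = 1 ∨ i = 2 := by omega
      norm_num at hu1
      rcases h1 with rfl | rfl | rfl
      · norm_num
      · norm_num; linear_combination hu1
      · norm_num; ring
    · have h1 : i = 0 ∨ i = 1 ∨ i = 2 ∨ i = 3 := by omega
      norm_num at hu1
      rcases h1 with rfl | rfl | rfl | rfl
      · norm_num
      · norm_num; linear_combination hu1
      · norm_num; linear_combination hu1
      · norm_num; ring
  · -- d ≥ 4
    push_neg at hd3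
    set β : K := (θ 0 - θ 3) / (θ 1 - θ 2) - 1 with hβ
    have hrecθ : ∀ i, 2 ≤ i → i ≤ d - 1 →
        θ (i-2) - θ (i+1) = (β + 1) * (θ (i-1) - θ i) := by
      intro i h2 h1
      have h5 := (pa5 i 2 h2 h1 (by omega) (by omega)).2
      norm_num at h5
      have hden : θ (i-1) - θ i ≠ 0 :=
        sub_ne_zero.mpr ((pa2 (i-1) i (by omega) (by omega) (by omega)).1)
      rw [div_eq_iff hden] at h5
      rw [h5, hβ]; ring
    have hΔrec : ∀ i, 2 ≤ i → i ≤ d - 1 →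
        θ (i+1) - θ i = β * (θ i - θ (i-1)) - (θ (i-1) - θ (i-2)) := by
      intro i h2 h1
      linear_combination -(hrecθ i h2 h1)
    set Δ : ℕ → K := fun i => θ i - θ (i-1) with hΔ
    set z : ℕ → K := fun i => Δ i - Δ (d+1-i) with hz
    have hΔrec' : ∀ i, 2 ≤ i → i ≤ d - 1 → Δ (i+1) = β * Δ i - Δ (i-1) := by
      intro i h2 h1
      have e := hΔrec i h2 h1
      simp only [hΔ]
      rw [show i + 1 - 1 = i from by omega, show i - 1 - 1 = i - 2 from by omega]
      exact e
    have hz1 : z 1 = 0 := by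
      simp only [hz, hΔ]
      rw [show d + 1 - 1 = d from by omega, show (1:ℕ) - 1 = 0 from rfl]
      linear_combination hu1
    have hzrec : ∀ i, 2 ≤ i → i ≤ d - 1 → z (i+1) = β * z i - z (i-1) := by
      intro i h2 h1
      have ea := hΔrec' i h2 h1
      have eb := hΔrec' (d+1-i) (by omega) (by omega)
      rw [show d + 1 - i + 1 = d + 2 - i from by omega,
        show d + 1 - i - 1 = d - i from by omega] at eb
      simp only [hz]
      rw [show d + 1 - (i+1) = d - i from by omega,
        show d + 1 - (i-1) = d + 2 - i from by omega]
      linear_combination ea - eb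
    have hzs : ∀ i, 1 ≤ i → i ≤ d → z i = sseq β (i-1) * z 2 := by
      intro i
      induction i using Nat.strong_induction_on with
      | _ i ih =>
        match i with
        | 0 => intro h0 _; omega
        | 1 => intro _ _; rw [show (1:ℕ)-1 = 0 from rfl,
            show sseq β 0 = (0:K) from rfl, zero_mul]; exact hz1
        | 2 => intro _ _; rw [show (2:ℕ)-1 = 1 from rfl,
            show sseq β 1 = (1:K) from rfl, one_mul]
        | (k+3) =>
          intro _ hkd
          have ih2 := ih (k+2) (by omega) (by omega) (by omega)
          have ih1 := ih (k+1) (by omega) (by omega) (by omega)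
          have hr := hzrec (k+2) (by omega) (by omega)
          rw [show k+2+1 = k+3 from rfl, show k+2-1 = k+1 from rfl] at hr
          rw [hr, ih2, ih1, show k+3-1 = k+2 from rfl, show k+1-1 = k from rfl,
            show k+2-1 = k+1 from rfl, sseq_add_two]
          ring
    have hzd : z d = 0 := by
      simp only [hz, hΔ] at hz1 ⊢
      rw [show d + 1 - d = 1 from by omega, show (1:ℕ) - 1 = 0 from rfl]
      rw [show d + 1 - 1 = d from by omega, show (1:ℕ) - 1 = 0 from rfl] at hz1
      linear_combination -hz1
    have hzd1 : z (d-1) = -(z 2) := by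
      simp only [hz]
      rw [show d + 1 - (d-1) = 2 from by omega, show d + 1 - 2 = d - 1 from by omega]
      ring
    by_cases hz2 : z 2 = 0
    · have hzero : ∀ i, 1 ≤ i → i ≤ d → z i = 0 := by
        intro i h1 h2; rw [hzs i h1 h2, hz2, mul_zero]
      intro i hi
      induction i with
      | zero => rw [Nat.sub_zero]
      | succ k ihk =>
        have hk : k ≤ d := by omega
        have ihv := ihk hk
        have hzk := hzero (k+1) (by omega) hi
        simp only [hz, hΔ] at hzk
        rw [show d + 1 - (k+1) = d - k from by omega, show k + 1 - 1 = k from rfl,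
          show d - k - 1 = d - (k+1) from by omega] at hzk
        linear_combination ihv + hzk
    · exfalso
      have hs1 : sseq β (d-1) = 0 := by
        have hh := hzs d (by omega) le_rfl
        rw [hzd] at hh
        exact ((mul_eq_zero.mp hh.symm).resolve_right hz2)
      have hs2 : sseq β (d-2) = -1 := by
        have h' := hzs (d-1) (by omega) (by omega)
        rw [show d - 1 - 1 = d - 2 from by omega, hzd1] at h'
        have hf : (sseq β (d-2) + 1) * z 2 = 0 := by linear_combination -h'
        have := (mul_eq_zero.mp hf).resolve_right hz2
        linear_combination this
      have hanti : ∀ k, k ≤ d - 1 → sseq β (d - 1 - k) = -sseq β k := by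
        intro k
        induction k using Nat.strong_induction_on with
        | _ k ih =>
          match k with
          | 0 =>
            intro _
            rw [Nat.sub_zero, hs1, show sseq β 0 = (0:K) from rfl, neg_zero]
          | 1 =>
            intro _
            rw [show d - 1 - 1 = d - 2 from by omega, hs2,
              show sseq β 1 = (1:K) from rfl]
          | (m+2) =>
            intro hm
            have ih1 := ih (m+1) (by omega) (by omega)
            have ih0 := ih m (by omega) (by omega)
            have hfr := sseq_add_two β (d-3-m)
            rw [show d - 3 - m + 2 = d - 1 - m from by omega,
              show d - 3 - m + 1 = d - 1 - (m+1) from by omega,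
              show d - 3 - m = d - 1 - (m+2) from by omega] at hfr
            rw [ih1, ih0] at hfr
            rw [sseq_add_two]
            linear_combination hfr
      have hA0 : ∑ k ∈ Finset.range (d-1), sseq β k = 0 := by
        have h1 : ∑ k ∈ Finset.range (d-1), sseq β (d-1-k)
            = ∑ k ∈ Finset.range (d-1), sseq β (k+1) := by
          rw [← Finset.sum_range_reflect (fun j => sseq β (j+1)) (d-1)]
          apply Finset.sum_congr rfl
          intro k hk
          have hk' := Finset.mem_range.mp hk
          congr 1
          omega
        have h2 : ∑ k ∈ Finset.range ((d-1)+1), sseq β k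
            = ∑ k ∈ Finset.range (d-1), sseq β (k+1) + sseq β 0 :=
          Finset.sum_range_succ' _ _
        have h3 : ∑ k ∈ Finset.range ((d-1)+1), sseq β k
            = ∑ k ∈ Finset.range (d-1), sseq β k + sseq β (d-1) :=
          Finset.sum_range_succ _ _
        rw [hs1, add_zero] at h3
        rw [show sseq β 0 = (0:K) from rfl, add_zero] at h2
        have hrefl : ∑ k ∈ Finset.range (d-1), sseq β (d-1-k)
            = ∑ k ∈ Finset.range (d-1), sseq β k := by
          rw [h1, ← h2, h3]
        have hterm : ∀ k ∈ Finset.range (d-1), sseq β k = -sseq β (d-1-k) := by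
          intro k hk
          have hk' := Finset.mem_range.mp hk
          have ha := hanti (d-1-k) (by omega)
          rw [show d - 1 - (d-1-k) = k from by omega] at ha
          linear_combination ha
        have hAA : ∑ k ∈ Finset.range (d-1), sseq β k
            = -∑ k ∈ Finset.range (d-1), sseq β (d-1-k) := by
          rw [Finset.sum_congr rfl hterm, Finset.sum_neg_distrib]
        rw [hrefl] at hAA
        have h2A : (2:K) * ∑ k ∈ Finset.range (d-1), sseq β k = 0 := by
          linear_combination hAA
        exact (mul_eq_zero.mp h2A).resolve_left h2K
      have hA3 : ∑ k ∈ Finset.range (d-2), sseq β k = 1 := by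
        have h1 : ∑ k ∈ Finset.range ((d-2)+1), sseq β k
            = ∑ k ∈ Finset.range (d-2), sseq β k + sseq β (d-2) :=
          Finset.sum_range_succ _ _
        rw [show (d-2)+1 = d-1 from by omega, hA0, hs2] at h1
        linear_combination -h1
      have hx : ∀ i, 2 ≤ i → i ≤ d → Δ i = Δ 2 * sseq β (i-1) - Δ 1 * sseq β (i-2) := by
        intro i
        induction i using Nat.strong_induction_on with
        | _ i ih =>
          match i with
          | 0 => intro h0 _; omega
          | 1 => intro h0 _; omega
          | 2 =>
            intro _ _
            rw [show (2:ℕ)-1 = 1 from rfl, show (2:ℕ)-2 = 0 from rfl,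
              show sseq β 1 = (1:K) from rfl, show sseq β 0 = (0:K) from rfl]
            ring
          | 3 =>
            intro _ h3
            have hr := hΔrec' 2 (by omega) (by omega)
            norm_num at hr
            rw [hr, show (3:ℕ)-1 = 2 from rfl, show (3:ℕ)-2 = 1 from rfl,
              sseq_add_two β 0, show sseq β 1 = (1:K) from rfl,
              show sseq β 0 = (0:K) from rfl]
            ring
          | (k+4) =>
            intro _ hkd
            have ih2 := ih (k+3) (by omega) (by omega) (by omega)
            have ih1 := ih (k+2) (by omega) (by omega) (by omega)
            have hr := hΔrec' (k+3) (by omega) (by omega)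
            rw [show k+3-1 = k+2 from rfl, show k+3+1 = k+4 from rfl] at hr
            rw [hr, ih2, ih1, show k+3-1 = k+2 from rfl, show k+3-2 = k+1 from rfl,
              show k+2-1 = k+1 from rfl, show k+2-2 = k from rfl,
              show k+4-1 = k+3 from rfl, show k+4-2 = k+2 from rfl,
              sseq_add_two β (k+1), sseq_add_two β k]
            ring
      have htel : θ (d-1) - θ 0 = ∑ i ∈ Finset.range (d-1), (θ (i+1) - θ i) := by
        rw [Finset.sum_range_sub θ (d-1)]
      have hsplit : ∑ i ∈ Finset.range (d-1), (θ (i+1) - θ i)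
          = ∑ i ∈ Finset.range (d-2), (θ (i+2) - θ (i+1)) + (θ 1 - θ 0) := by
        rw [show d - 1 = (d-2) + 1 from by omega, Finset.sum_range_succ']
      have hterm : ∀ i ∈ Finset.range (d-2),
          θ (i+2) - θ (i+1) = Δ 2 * sseq β (i+1) - Δ 1 * sseq β i := by
        intro i hi
        have hi' := Finset.mem_range.mp hi
        have hxx := hx (i+2) (by omega) (by omega)
        rw [show i+2-1 = i+1 from rfl, show i+2-2 = i from rfl] at hxx
        simp only [hΔ] at hxx
        rw [show i+2-1 = i+1 from rfl] at hxx
        exact hxx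
      have hsum2 : ∑ i ∈ Finset.range (d-2), (θ (i+2) - θ (i+1))
          = Δ 2 * (∑ i ∈ Finset.range (d-2), sseq β (i+1))
            - Δ 1 * (∑ i ∈ Finset.range (d-2), sseq β i) := by
        rw [Finset.sum_congr rfl hterm, Finset.sum_sub_distrib,
          ← Finset.mul_sum, ← Finset.mul_sum]
      have hshift : ∑ i ∈ Finset.range (d-2), sseq β (i+1) = 0 := by
        have hss : ∑ i ∈ Finset.range ((d-2)+1), sseq β i
            = ∑ i ∈ Finset.range (d-2), sseq β (i+1) + sseq β 0 :=
          Finset.sum_range_succ' _ _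
        rw [show (d-2)+1 = d-1 from by omega, hA0,
          show sseq β 0 = (0:K) from rfl, add_zero] at hss
        linear_combination -hss
      have hcontr : θ (d-1) - θ 0 = 0 := by
        rw [htel, hsplit, hsum2, hshift, hA3]
        simp only [hΔ]
        rw [show (1:ℕ)-1 = 0 from rfl]
        ring
      have hne := (pa2 (d-1) 0 (by omega) (by omega) (by omega)).1
      exact hne (by linear_combination hcontr)

end Core


/-- Characterization of when the relative `P^⇓` is affine isomorphic to `P`. -/
theorem Down_affine_iso {K : Type*} [Field K] (d : ℕ) (hd : 1 ≤ d)
    (θ θs φ ϕ : ℕ → K) (hPA : IsParamArray K d θ θs φ ϕ) :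
    -- (i) ↔ (ii)
    ((∃ ξ ζ ξs ζs : K, ξ ≠ 0 ∧ ξs ≠ 0 ∧
        (∀ i ≤ d, θ (d - i) = ξ * θ i + ζ ∧ θs i = ξs * θs i + ζs) ∧
        (∀ i, 1 ≤ i → i ≤ d → ϕ i = ξ * ξs * φ i ∧ φ i = ξ * ξs * ϕ i))
      ↔ (φ 1 = -ϕ 1 ∧ φ d = -ϕ d)) ∧
    -- (ii) ↔ (iii)
    ((φ 1 = -ϕ 1 ∧ φ d = -ϕ d) ↔
      ((∀ i, 1 ≤ i → i ≤ d → φ i = -ϕ i) ∧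
       (∀ i ≤ d, θ i + θ (d - i) = θ 0 + θ d))) ∧
    -- moreover: (i) is satisfied with ξ = −1, ζ = the common value of
    -- θ_i + θ_{d−i}, ξ* = 1, ζ* = 0
    ((φ 1 = -ϕ 1 ∧ φ d = -ϕ d) →
      ((∀ i ≤ d, θ (d - i) = (-1 : K) * θ i + (θ 0 + θ d) ∧ θs i = 1 * θs i + 0) ∧
       (∀ i, 1 ≤ i → i ≤ d →
         ϕ i = (-1 : K) * 1 * φ i ∧ φ i = (-1 : K) * 1 * ϕ i))) := by
  have pa2 := hPA.2.1
  have hD : θ 0 - θ d ≠ 0 :=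
    sub_ne_zero.mpr ((pa2 0 d (by omega) le_rfl (by omega)).1)
  have Hcore : (φ 1 = -ϕ 1 ∧ φ d = -ϕ d) →
      ∀ i ≤ d, θ i + θ (d - i) = θ 0 + θ d :=
    fun h => theta_sum_const d hd θ θs φ ϕ hPA h.1 h.2
  have Hneg : (φ 1 = -ϕ 1 ∧ φ d = -ϕ d) →
      ∀ i, 1 ≤ i → i ≤ d → φ i = -ϕ i := by
    intro h i h1 h2
    have hs := phi_add_phi d hd θ θs φ ϕ hPA h.1 i h1 h2
    have hu := Hcore h (i-1) (by omega)
    linear_combination hs + (θs i - θs 0) * hu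
  refine ⟨?_, ?_, ?_⟩
  · constructor
    · rintro ⟨ξ, ζ, ξs, ζs, hξ, hξs, haff, hmul⟩
      have h0 := (haff 0 (Nat.zero_le d)).1
      rw [Nat.sub_zero] at h0
      have hdth := (haff d le_rfl).1
      rw [Nat.sub_self] at hdth
      have hξm : ξ = -1 := by
        have h' : (ξ + 1) * (θ 0 - θ d) = 0 := by linear_combination hdth - h0
        have := (mul_eq_zero.mp h').resolve_right hD
        linear_combination this
      have hs0 := (haff 0 (Nat.zero_le d)).2
      have hs1 := (haff 1 hd).2
      have hξsm : ξs = 1 := by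
        have hne : θs 0 - θs 1 ≠ 0 :=
          sub_ne_zero.mpr ((pa2 0 1 (by omega) hd (by omega)).2)
        have h' : (ξs - 1) * (θs 0 - θs 1) = 0 := by linear_combination hs1 - hs0
        have := (mul_eq_zero.mp h').resolve_right hne
        linear_combination this
      subst hξm hξsm
      constructor
      · have hh := (hmul 1 le_rfl hd).1
        linear_combination hh
      · have hh := (hmul d hd le_rfl).1
        linear_combination hh
    · intro hii
      refine ⟨-1, θ 0 + θ d, 1, 0, by norm_num, one_ne_zero, ?_, ?_⟩
      · intro i hi
        exact ⟨by linear_combination Hcore hii i hi, by ring⟩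
      · intro i h1' h2'
        have hn := Hneg hii i h1' h2'
        exact ⟨by linear_combination hn, by linear_combination hn⟩
  · constructor
    · intro hii
      exact ⟨Hneg hii, Hcore hii⟩
    · rintro ⟨hA, hB⟩
      exact ⟨hA 1 le_rfl hd, hA d hd le_rfl⟩
  · intro hii
    constructor
    · intro i hi
      exact ⟨by linear_combination Hcore hii i hi, by ring⟩
    · intro i h1' h2'
      have hn := Hneg hii i h1' h2'
      exact ⟨by linear_combination hn, by linear_combination hn⟩
end

section
/- Let ({θ_i}_{i=0}^d; {θ*_i}_{i=0}^d; {φ_i}_{i=1}^d; {ϕ_i}_{i=1}^d) be a parameter array of diameter d ≥ 1 over a field K. The following are equivalent: (i) there exist scalars ξ, ζ, ξ*, ζ* in K with ξ, ξ* nonzero such that θ*_i = ξθ_i + ζ and θ_i = ξ*θ*_i + ζ* for 0 ≤ i ≤ d, and φ_i = ξξ*φ_i and ϕ_{d−i+1} = ξξ*ϕ_i for 1 ≤ i ≤ d (i.e., the relative P^* is affine isomorphic to P); (ii) ϕ_1 = ϕ_d; (iii) ϕ_i = ϕ_{d−i+1} for 1 ≤ i ≤ d; (iv) (θ*_i − θ*_0)(θ_i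 − θ_0)^{−1} is independent of i for 1 ≤ i ≤ d. Moreover, if (i)–(iv) hold, then (i) is satisfied with ξ equal to the common value of (θ*_i − θ*_0)(θ_i − θ_0)^{−1}, ζ = θ*_0 − ξθ_0, ξ* = ξ^{−1}, and ζ* = θ_0 − ξ*θ*_0. -/
def solSeq {K : Type*} [Field K] (β x1 x2 : K) : ℕ → K
  | 0 => 0
  | 1 => x1
  | 2 => x2
  | n + 3 => β * solSeq β x1 x2 (n + 2) - solSeq β x1 x2 (n + 1)

lemma solSeq_succ {K : Type*} [Field K] (β x1 x2 : K) (n : ℕ) :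
    solSeq β x1 x2 (n+3) = β * solSeq β x1 x2 (n+2) - solSeq β x1 x2 (n+1) := by
  simp [solSeq]

lemma solSeq_rec {K : Type*} [Field K] (β x1 x2 : K) (i : ℕ) (h2 : 2 ≤ i) :
    solSeq β x1 x2 (i+1) = β * solSeq β x1 x2 i - solSeq β x1 x2 (i-1) := by
  obtain ⟨k, rfl⟩ : ∃ k, i = k+2 := ⟨i-2, by omega⟩
  rw [show k+2+1 = k+3 from by omega, show k+2-1 = k+1 from by omega]
  exact solSeq_succ β x1 x2 k

lemma solSeq_lin {K : Type*} [Field K] (β x1 x2 : K) :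
    ∀ i, solSeq β x1 x2 i = x1 * solSeq β 1 0 i + x2 * solSeq β 0 1 i := by
  intro i
  induction i using Nat.strong_induction_on with
  | _ i ih =>
    match i with
    | 0 => simp [solSeq]
    | 1 => simp [solSeq]
    | 2 => simp [solSeq]
    | n + 3 =>
      rw [solSeq_succ, solSeq_succ, solSeq_succ, ih (n+2) (by omega), ih (n+1) (by omega)]
      ring

lemma solSeq_casor {K : Type*} [Field K] (β : K) (k : ℕ) :
    solSeq β 1 0 (k+1) * solSeq β 0 1 (k+2) - solSeq β 1 0 (k+2) * solSeq β 0 1 (k+1) = 1 := by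
  induction k with
  | zero => simp [solSeq]
  | succ n ihn =>
    rw [show n+1+1 = n+2 from by omega, show n+1+2 = n+3 from by omega,
      solSeq_succ, solSeq_succ]
    linear_combination ihn

lemma solSeq_agrees {K : Type*} [Field K] (β : K) (y : ℕ → K) (N : ℕ)
    (hy : ∀ i, 2 ≤ i → i ≤ N → y (i+1) = β * y i - y (i-1)) :
    ∀ i, 1 ≤ i → i ≤ N + 1 → y i = solSeq β (y 1) (y 2) i := by
  intro i
  induction i using Nat.strong_induction_on with
  | _ i ih =>
    intro h1 hN
    rcases i with _ | i0
    · omega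
    rcases i0 with _ | i1
    · simp [solSeq]
    rcases i1 with _ | n
    · simp [solSeq]
    · -- i = n+1+1+1
      have e1 := ih (n+2) (by omega) (by omega) (by omega)
      have e2 := ih (n+1) (by omega) (by omega) (by omega)
      have hrec := hy (n+2) (by omega) (by omega)
      rw [show n+2-1 = n+1 from by omega] at hrec
      rw [show n+1+1+1 = n+2+1 from by omega, hrec,
        solSeq_rec β (y 1) (y 2) (n+2) (by omega),
        show n+2-1 = n+1 from by omega, e1, e2]

lemma window_sum {K : Type*} [Field K] (β : K) (M : ℕ) (y : ℕ → K)
    (hy : ∀ i, 2 ≤ i → i ≤ M → y (i+1) = β * y i - y (i-1)) :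
    ∑ j ∈ Finset.range (M+1), y (j+1)
      = y 1 * ∑ j ∈ Finset.range (M+1), solSeq β 1 0 (j+1)
        + y 2 * ∑ j ∈ Finset.range (M+1), solSeq β 0 1 (j+1) := by
  rw [Finset.mul_sum, Finset.mul_sum, ← Finset.sum_add_distrib]
  refine Finset.sum_congr rfl fun j hj => ?_
  rw [Finset.mem_range] at hj
  rw [solSeq_agrees β y M hy (j+1) (by omega) (by omega), solSeq_lin]

lemma rev_rec {K : Type*} [Field K] (β : K) (M : ℕ) (y : ℕ → K)
    (hy : ∀ i, 2 ≤ i → i ≤ M → y (i+1) = β * y i - y (i-1)) :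
    ∀ i, 2 ≤ i → i ≤ M →
      (fun j => y (M + 2 - j)) (i+1) = β * (fun j => y (M+2-j)) i - (fun j => y (M+2-j)) (i-1) := by
  intro i h2 hM
  simp only
  have h := hy (M + 2 - i) (by omega) (by omega)
  rw [show M + 2 - (i+1) = M + 1 - i from by omega,
      show M + 2 - (i-1) = M + 3 - i from by omega]
  rw [show M + 2 - i + 1 = M + 3 - i from by omega, show M + 2 - i - 1 = M + 1 - i from by omega] at h
  linear_combination h

lemma rev_sum {K : Type*} [Field K] (M : ℕ) (y : ℕ → K) :
    ∑ j ∈ Finset.range (M+1), y (M + 2 - (j+1)) = ∑ j ∈ Finset.range (M+1), y (j+1) := by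
  rw [← Finset.sum_range_reflect (fun j => y (j+1)) (M+1)]
  refine Finset.sum_congr rfl fun j hj => ?_
  rw [Finset.mem_range] at hj
  congr 1
  omega

lemma rev_window {K : Type*} [Field K] (β : K) (M : ℕ) (y : ℕ → K)
    (hy : ∀ i, 2 ≤ i → i ≤ M → y (i+1) = β * y i - y (i-1)) :
    ∑ j ∈ Finset.range (M+1), y (j+1)
      = y (M+1) * ∑ j ∈ Finset.range (M+1), solSeq β 1 0 (j+1)
        + y M * ∑ j ∈ Finset.range (M+1), solSeq β 0 1 (j+1) := by
  have h1 := window_sum β M (fun j => y (M+2-j)) (rev_rec β M y hy)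
  rw [show M+2-1 = M+1 from by omega, show M+2-2 = M from by omega] at h1
  rw [rev_sum M y] at h1
  exact h1

lemma core {K : Type*} [Field K] (β : K) (m : ℕ) (v w : ℕ → K)
    (hv : ∀ i, 2 ≤ i → i ≤ m+2 → v (i+1) = β * v i - v (i-1))
    (hw : ∀ i, 2 ≤ i → i ≤ m+2 → w (i+1) = β * w i - w (i-1))
    (hv1 : v 1 = 0)
    (hvsum : ∑ j ∈ Finset.range (m+3), v (j+1) = 0)
    (hw1 : ∑ j ∈ Finset.range (m+3), w (j+1) ≠ 0)
    (hw2 : ∑ j ∈ Finset.range (m+2), w (j+1) ≠ 0) :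
    v 2 = 0 := by
  by_contra hv2
  have hδrec : ∀ i, 2 ≤ i → i ≤ m+2 →
      solSeq β (0:K) 1 (i+1) = β * solSeq β (0:K) 1 i - solSeq β (0:K) 1 (i-1) :=
    fun i h2 _ => solSeq_rec β 0 1 i h2
  have herec : ∀ i, 2 ≤ i → i ≤ m+2 →
      solSeq β (1:K) 0 (i+1) = β * solSeq β (1:K) 0 i - solSeq β (1:K) 0 (i-1) :=
    fun i h2 _ => solSeq_rec β 1 0 i h2
  have hvrep := window_sum β (m+2) v hv
  rw [show m+2+1 = m+3 from by omega] at hvrep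
  rw [hvsum, hv1, zero_mul, zero_add] at hvrep
  have hSδ : ∑ j ∈ Finset.range (m+3), solSeq β (0:K) 1 (j+1) = 0 :=
    (mul_eq_zero.mp hvrep.symm).resolve_left hv2
  by_cases hSe : ∑ j ∈ Finset.range (m+3), solSeq β (1:K) 0 (j+1) = 0
  · have hwrep := window_sum β (m+2) w hw
    rw [show m+2+1 = m+3 from by omega] at hwrep
    rw [hSe, hSδ, mul_zero, mul_zero, add_zero] at hwrep
    exact hw1 hwrep
  · have hδr := rev_window β (m+2) (solSeq β (0:K) 1) hδrec
    rw [show m+2+1 = m+3 from by omega] at hδr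
    rw [hSδ, mul_zero, add_zero] at hδr
    have hδtop : solSeq β (0:K) 1 (m+3) = 0 :=
      (mul_eq_zero.mp hδr.symm).resolve_right hSe
    have her := rev_window β (m+2) (solSeq β (1:K) 0) herec
    rw [show m+2+1 = m+3 from by omega] at her
    rw [hSδ, mul_zero, add_zero] at her
    have h' : (solSeq β (1:K) 0 (m+3) - 1) * (∑ j ∈ Finset.range (m+3), solSeq β (1:K) 0 (j+1)) = 0 := by
      linear_combination -her
    have hetop : solSeq β (1:K) 0 (m+3) = 1 :=
      sub_eq_zero.mp ((mul_eq_zero.mp h').resolve_right hSe)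
    have hcas := solSeq_casor β (m+1)
    rw [show m+1+1 = m+2 from by omega, show m+1+2 = m+3 from by omega] at hcas
    rw [hδtop, hetop] at hcas
    have hδm2 : solSeq β (0:K) 1 (m+2) = -1 := by linear_combination -hcas
    have hs := Finset.sum_range_succ (fun j => solSeq β (0:K) 1 (j+1)) (m+2)
    rw [show m+2+1 = m+3 from by omega] at hs
    rw [hSδ, hδtop] at hs
    have hSδ' : ∑ j ∈ Finset.range (m+2), solSeq β (0:K) 1 (j+1) = 0 := by
      linear_combination -hs
    have hδr' := rev_window β (m+1) (solSeq β (0:K) 1) (fun i h2 _ => solSeq_rec β 0 1 i h2)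
    rw [show m+1+1 = m+2 from by omega] at hδr'
    rw [hSδ', hδm2, mul_zero, add_zero] at hδr'
    have hSe' : ∑ j ∈ Finset.range (m+2), solSeq β (1:K) 0 (j+1) = 0 := by
      linear_combination hδr'
    have hwrep' := window_sum β (m+1) w (fun i h2 hi => hw i h2 (by omega))
    rw [show m+1+1 = m+2 from by omega] at hwrep'
    rw [hSe', hSδ', mul_zero, mul_zero, add_zero] at hwrep'
    exact hw2 hwrep'

def wfun {K : Type*} [Field K] (θ : ℕ → K) : ℕ → K := fun j => θ j - θ (j-1)

def vfun {K : Type*} [Field K] (θ θs : ℕ → K) : ℕ → K :=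
  fun j => (θs j - θs (j-1)) * (θ 1 - θ 0) - (θs 1 - θs 0) * (θ j - θ (j-1))

lemma slope_of_rec {K : Type*} [Field K] (β : K) (m : ℕ) (θ θs : ℕ → K)
    (hθ : ∀ k, k ≤ m → θ (k+3) - θ (k+2) = β * (θ (k+2) - θ (k+1)) - (θ (k+1) - θ k))
    (hθs : ∀ k, k ≤ m → θs (k+3) - θs (k+2) = β * (θs (k+2) - θs (k+1)) - (θs (k+1) - θs k))
    (hda : θ (m+3) - θ 0 ≠ 0) (hd1a : θ (m+2) - θ 0 ≠ 0)
    (hψd : (θs (m+3) - θs 0) * (θ 1 - θ 0) = (θs 1 - θs 0) * (θ (m+3) - θ 0)) :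
    ∀ i, i ≤ m+3 → (θs i - θs 0) * (θ 1 - θ 0) = (θs 1 - θs 0) * (θ i - θ 0) := by
  have hwrec : ∀ i, 2 ≤ i → i ≤ m+2 → wfun θ (i+1) = β * wfun θ i - wfun θ (i-1) := by
    intro i h2 hi
    obtain ⟨k, rfl⟩ : ∃ k, i = k+2 := ⟨i-2, by omega⟩
    simp only [wfun]
    rw [show k+2+1-1 = k+2 from by omega, show k+2-1 = k+1 from by omega,
      show k+1-1 = k from by omega, show k+2+1 = k+3 from by omega]
    exact hθ k (by omega)
  have hvrec : ∀ i, 2 ≤ i → i ≤ m+2 → vfun θ θs (i+1) = β * vfun θ θs i - vfun θ θs (i-1) := by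
    intro i h2 hi
    obtain ⟨k, rfl⟩ : ∃ k, i = k+2 := ⟨i-2, by omega⟩
    simp only [vfun]
    rw [show k+2+1-1 = k+2 from by omega, show k+2-1 = k+1 from by omega,
      show k+1-1 = k from by omega, show k+2+1 = k+3 from by omega]
    linear_combination (θ 1 - θ 0) * hθs k (by omega) - (θs 1 - θs 0) * hθ k (by omega)
  have sumw : ∀ M, ∑ j ∈ Finset.range M, wfun θ (j+1) = θ M - θ 0 := by
    intro M
    rw [← Finset.sum_range_sub (fun j => θ j) M]
    exact Finset.sum_congr rfl fun j _ => by simp [wfun, Nat.add_sub_cancel]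
  have sumv : ∀ M, ∑ j ∈ Finset.range M, vfun θ θs (j+1)
      = (θs M - θs 0) * (θ 1 - θ 0) - (θs 1 - θs 0) * (θ M - θ 0) := by
    intro M
    have h1 : ∑ j ∈ Finset.range M, vfun θ θs (j+1)
        = ∑ j ∈ Finset.range M, ((θs (j+1) - θs j) * (θ 1 - θ 0) - (θs 1 - θs 0) * (θ (j+1) - θ j)) :=
      Finset.sum_congr rfl fun j _ => by simp [vfun, Nat.add_sub_cancel]
    rw [h1, Finset.sum_sub_distrib, ← Finset.sum_mul, ← Finset.mul_sum,
      Finset.sum_range_sub (fun j => θs j) M, Finset.sum_range_sub (fun j => θ j) M]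
  have hv1 : vfun θ θs 1 = 0 := by
    simp only [vfun, show (1:ℕ)-1 = 0 from rfl]
    ring
  have hv2 : vfun θ θs 2 = 0 := by
    apply core β m (vfun θ θs) (wfun θ) hvrec hwrec hv1
    · rw [sumv (m+3)]; linear_combination hψd
    · rw [sumw (m+3)]; exact hda
    · rw [sumw (m+2)]; exact hd1a
  intro i hi
  have hvall : ∀ j, 1 ≤ j → j ≤ m+3 → vfun θ θs j = 0 := by
    intro j h1 h2
    have ha := solSeq_agrees β (vfun θ θs) (m+2) hvrec j h1 (by omega)
    rw [hv1, hv2] at ha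
    rw [ha, solSeq_lin β 0 0 j]
    ring
  have hsum0 : ∑ j ∈ Finset.range i, vfun θ θs (j+1) = 0 :=
    Finset.sum_eq_zero fun j hj =>
      hvall (j+1) (by omega) (by rw [Finset.mem_range] at hj; omega)
  rw [sumv i] at hsum0
  linear_combination hsum0


/-- Characterization of when the relative `P^*` is affine isomorphic to `P`. -/
theorem star_affine_iso {K : Type*} [Field K] (d : ℕ) (hd : 1 ≤ d)
    (θ θs φ ϕ : ℕ → K) (hPA : IsParamArray K d θ θs φ ϕ) :
    -- (i) ↔ (ii)
    ((∃ ξ ζ ξs ζs : K, ξ ≠ 0 ∧ ξs ≠ 0 ∧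
        (∀ i ≤ d, θs i = ξ * θ i + ζ ∧ θ i = ξs * θs i + ζs) ∧
        (∀ i, 1 ≤ i → i ≤ d → φ i = ξ * ξs * φ i ∧ ϕ (d - i + 1) = ξ * ξs * ϕ i))
      ↔ ϕ 1 = ϕ d) ∧
    -- (ii) ↔ (iii)
    ((ϕ 1 = ϕ d) ↔ (∀ i, 1 ≤ i → i ≤ d → ϕ i = ϕ (d - i + 1))) ∧
    -- (ii) ↔ (iv)
    ((ϕ 1 = ϕ d) ↔
      (∀ i j, 1 ≤ i → i ≤ d → 1 ≤ j → j ≤ d →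
        (θs i - θs 0) * (θ i - θ 0)⁻¹ = (θs j - θs 0) * (θ j - θ 0)⁻¹)) ∧
    -- moreover: (i) is satisfied with ξ the common value of
    -- (θ*_i − θ*_0)(θ_i − θ_0)⁻¹, ζ = θ*_0 − ξθ_0, ξ* = ξ⁻¹, ζ* = θ_0 − ξ*θ*_0
    ((ϕ 1 = ϕ d) →
      ∃ ξ ζ ξs ζs : K,
        ξ = (θs d - θs 0) * (θ d - θ 0)⁻¹ ∧ ζ = θs 0 - ξ * θ 0 ∧
        ξs = ξ⁻¹ ∧ ζs = θ 0 - ξs * θs 0 ∧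
        ξ ≠ 0 ∧ ξs ≠ 0 ∧
        (∀ i ≤ d, θs i = ξ * θ i + ζ ∧ θ i = ξs * θs i + ζs) ∧
        (∀ i, 1 ≤ i → i ≤ d → φ i = ξ * ξs * φ i ∧ ϕ (d - i + 1) = ξ * ξs * ϕ i)) := by
  obtain ⟨hPA1, hPA2, hPA3, hPA4, hPA5⟩ := hPA
  have haz : ∀ i, 1 ≤ i → i ≤ d → θ i - θ 0 ≠ 0 := fun i h1 h2 =>
    sub_ne_zero.2 (hPA2 i 0 h2 (Nat.zero_le d) (by omega)).1
  have ha1 : θ 1 - θ 0 ≠ 0 := haz 1 le_rfl hd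
  have had : θ d - θ 0 ≠ 0 := haz d hd le_rfl
  have hbd : θs d - θs 0 ≠ 0 := sub_ne_zero.2 (hPA2 d 0 le_rfl (Nat.zero_le d) (by omega)).2
  have hd11 : d - 1 + 1 = d := by omega
  -- symmetric partial sums
  have hnum : ∀ mm, mm ≤ d + 1 →
      ∑ h ∈ Finset.range mm, (θ h - θ (d-h)) = ∑ h ∈ Finset.range (d+1-mm), (θ h - θ (d-h)) := by
    intro mm hmm
    have key0 : ∑ h ∈ Finset.range (d+1), (θ h - θ (d-h)) = 0 := by
      rw [Finset.sum_sub_distrib]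
      have hrefl : ∑ h ∈ Finset.range (d+1), θ (d - h) = ∑ h ∈ Finset.range (d+1), θ h := by
        rw [← Finset.sum_range_reflect (fun h => θ h) (d+1)]
        exact Finset.sum_congr rfl fun x hx => by
          rw [Finset.mem_range] at hx; congr 1 <;> omega
      rw [hrefl, sub_self]
    have hsplit := Finset.sum_range_add (fun h => θ h - θ (d-h)) mm (d+1-mm)
    rw [show mm + (d+1-mm) = d+1 from by omega] at hsplit
    have htail : ∑ k ∈ Finset.range (d+1-mm), (θ (mm+k) - θ (d-(mm+k)))
        = -∑ h ∈ Finset.range (d+1-mm), (θ h - θ (d-h)) := by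
      rw [← Finset.sum_range_reflect (fun h => θ h - θ (d-h)) (d+1-mm), ← Finset.sum_neg_distrib]
      refine Finset.sum_congr rfl fun k hk => ?_
      rw [Finset.mem_range] at hk
      rw [show d - (mm+k) = d+1-mm-1-k from by omega,
        show mm + k = d - (d+1-mm-1-k) from by omega]
      ring
    linear_combination key0 - hsplit - htail
  have E1 : ∀ i, 1 ≤ i → i ≤ d → ϕ i - ϕ (d - i + 1)
      = (θs i - θs 0) * (θ (d-i+1) - θ 0) - (θs (d-i+1) - θs 0) * (θ i - θ 0) := by
    intro i h1 h2
    have h3 := hPA4 i h1 h2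
    have h4 := hPA4 (d-i+1) (by omega) (by omega)
    rw [show d - (d-i+1) + 1 = i from by omega] at h4
    have hdi : d - i + 1 = d + 1 - i := by omega
    rw [hdi] at h3 h4 ⊢
    have ht : ∑ h ∈ Finset.range i, ((θ h - θ (d-h)) / (θ 0 - θ d))
        = ∑ h ∈ Finset.range (d+1-i), ((θ h - θ (d-h)) / (θ 0 - θ d)) := by
      rw [← Finset.sum_div, ← Finset.sum_div, hnum i (by omega)]
    linear_combination h3 - h4 + φ 1 * ht
  -- main implication: (ii) ⇒ constant slopes
  have slope : ϕ 1 = ϕ d → ∀ i, i ≤ d →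
      (θs i - θs 0) * (θ 1 - θ 0) = (θs 1 - θs 0) * (θ i - θ 0) := by
    intro hii
    have hE := E1 1 le_rfl hd
    rw [hd11] at hE
    have hψd : (θs d - θs 0) * (θ 1 - θ 0) = (θs 1 - θs 0) * (θ d - θ 0) := by
      linear_combination hE - hii
    intro i hi
    rcases Nat.lt_or_ge d 3 with hdsmall | hd3
    · interval_cases d
      · interval_cases i
        · ring
        · ring
      · interval_cases i
        · ring
        · ring
        · exact hψd
    · obtain ⟨m, rfl⟩ : ∃ m, d = m + 3 := ⟨d-3, by omega⟩
      apply slope_of_rec ((θ 0 - θ 3)/(θ 1 - θ 2) - 1) m θ θs ?_ ?_ had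
        (haz (m+2) (by omega) (by omega)) hψd i hi
      · intro k hk
        have h5 := hPA5 (k+2) 2 (by omega) (by omega) (by omega) (by omega)
        rw [show k+2-2 = k from by omega, show k+2-1 = k+1 from by omega,
          show k+2+1 = k+3 from by omega, show (2:ℕ)-2 = 0 from rfl,
          show (2:ℕ)-1 = 1 from rfl, show (2:ℕ)+1 = 3 from rfl] at h5
        obtain ⟨h5a, h5b⟩ := h5
        have hne : θ (k+1) - θ (k+2) ≠ 0 :=
          sub_ne_zero.2 (hPA2 (k+1) (k+2) (by omega) (by omega) (by omega)).1
        rw [div_eq_iff hne] at h5b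
        linear_combination -h5b
      · intro k hk
        have h5 := hPA5 (k+2) 2 (by omega) (by omega) (by omega) (by omega)
        rw [show k+2-2 = k from by omega, show k+2-1 = k+1 from by omega,
          show k+2+1 = k+3 from by omega, show (2:ℕ)-2 = 0 from rfl,
          show (2:ℕ)-1 = 1 from rfl, show (2:ℕ)+1 = 3 from rfl] at h5
        obtain ⟨h5a, h5b⟩ := h5
        have hnes : θs (k+1) - θs (k+2) ≠ 0 :=
          sub_ne_zero.2 (hPA2 (k+1) (k+2) (by omega) (by omega) (by omega)).2
        have hst := h5a.symm.trans h5b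
        rw [div_eq_iff hnes] at hst
        linear_combination -hst
  have cross : ϕ 1 = ϕ d → ∀ i j, i ≤ d → j ≤ d →
      (θs i - θs 0) * (θ j - θ 0) = (θs j - θs 0) * (θ i - θ 0) := by
    intro hii i j hi hj
    have h1 := slope hii i hi
    have h2 := slope hii j hj
    apply mul_left_cancel₀ ha1
    linear_combination (θ j - θ 0) * h1 - (θ i - θ 0) * h2
  have phi_sym : ϕ 1 = ϕ d → ∀ i, 1 ≤ i → i ≤ d → ϕ i = ϕ (d-i+1) := by
    intro hii i h1 h2
    have hE := E1 i h1 h2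
    have hc := cross hii i (d-i+1) h2 (by omega)
    linear_combination hE + hc
  have most : ϕ 1 = ϕ d →
      ∃ ξ ζ ξs ζs : K,
        ξ = (θs d - θs 0) * (θ d - θ 0)⁻¹ ∧ ζ = θs 0 - ξ * θ 0 ∧
        ξs = ξ⁻¹ ∧ ζs = θ 0 - ξs * θs 0 ∧
        ξ ≠ 0 ∧ ξs ≠ 0 ∧
        (∀ i ≤ d, θs i = ξ * θ i + ζ ∧ θ i = ξs * θs i + ζs) ∧
        (∀ i, 1 ≤ i → i ≤ d → φ i = ξ * ξs * φ i ∧ ϕ (d - i + 1) = ξ * ξs * ϕ i) := by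
    intro hii
    have hξ : (θs d - θs 0) * (θ d - θ 0)⁻¹ ≠ 0 := mul_ne_zero hbd (inv_ne_zero had)
    refine ⟨(θs d - θs 0) * (θ d - θ 0)⁻¹, θs 0 - ((θs d - θs 0) * (θ d - θ 0)⁻¹) * θ 0,
      ((θs d - θs 0) * (θ d - θ 0)⁻¹)⁻¹,
      θ 0 - ((θs d - θs 0) * (θ d - θ 0)⁻¹)⁻¹ * θs 0,
      rfl, rfl, rfl, rfl, hξ, inv_ne_zero hξ, ?_, ?_⟩
    · intro i hi
      have hc := cross hii i d hi le_rfl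
      have h1 : θs i - θs 0 = ((θs d - θs 0) * (θ d - θ 0)⁻¹) * (θ i - θ 0) := by
        field_simp
        linear_combination hc
      constructor
      · linear_combination h1
      · have h2 : θ i - θ 0 = ((θs d - θs 0) * (θ d - θ 0)⁻¹)⁻¹ * (θs i - θs 0) := by
          rw [h1, ← mul_assoc, inv_mul_cancel₀ hξ, one_mul]
        linear_combination h2
    · intro i h1 h2
      rw [mul_inv_cancel₀ hξ, one_mul, one_mul]
      exact ⟨rfl, (phi_sym hii i h1 h2).symm⟩
  refine ⟨⟨?_, ?_⟩, ⟨fun h => phi_sym h, fun h => ?_⟩, ⟨?_, ?_⟩, fun h => most h⟩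
  · -- (i) → (ii)
    rintro ⟨ξ, ζ, ξs, ζs, hξ, hξs, haff, hphi⟩
    have hE := E1 1 le_rfl hd
    rw [hd11] at hE
    have hb1 : θs 1 - θs 0 = ξ * (θ 1 - θ 0) := by
      have u1 := (haff 1 hd).1
      have u0 := (haff 0 (Nat.zero_le d)).1
      linear_combination u1 - u0
    have hbdd : θs d - θs 0 = ξ * (θ d - θ 0) := by
      have u1 := (haff d le_rfl).1
      have u0 := (haff 0 (Nat.zero_le d)).1
      linear_combination u1 - u0
    linear_combination hE + (θ d - θ 0) * hb1 - (θ 1 - θ 0) * hbdd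
  · -- (ii) → (i)
    intro h
    obtain ⟨ξ, ζ, ξs, ζs, _, _, _, _, hξ, hξs, haff, hphi⟩ := most h
    exact ⟨ξ, ζ, ξs, ζs, hξ, hξs, haff, hphi⟩
  · -- (iii) → (ii)
    have := h 1 le_rfl hd
    rwa [hd11] at this
  · -- (ii) → (iv)
    intro h i j h1i h2i h1j h2j
    have hc := cross h i j h2i h2j
    have hai := haz i h1i h2i
    have haj := haz j h1j h2j
    field_simp
    first
      | linear_combination hc
      | linear_combination -hc
  · -- (iv) → (ii)
    intro h
    have h1d := h 1 d le_rfl hd hd le_rfl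
    have hE := E1 1 le_rfl hd
    rw [hd11] at hE
    field_simp [ha1, had] at h1d
    first
      | linear_combination hE + h1d
      | linear_combination hE - h1d
end

section
/- Let ({θ_i}_{i=0}^d; {θ*_i}_{i=0}^d; {φ_i}_{i=1}^d; {ϕ_i}_{i=1}^d) be a parameter array of diameter d ≥ 1 over a field K. The following are equivalent: (i) there exist scalars ξ, ζ, ξ*, ζ* in K with ξ, ξ* nonzero such that θ*_{d−i} = ξθ_i + ζ and θ_{d−i} = ξ*θ*_i + ζ* for 0 ≤ i ≤ d, and φ_{d−i+1} = ξξ*φ_i and ϕ_i = ξξ*ϕ_i for 1 ≤ i ≤ d (i.e., the relative P^↓⇓* is affine isomorphic to P); (ii) φ_1 = φ_d; (iii) φ_i = φ_{d−i+1} for 1 ≤ i ≤ d; (iv) (θ*_{d−i} − θ*_d)(θ_i − θ_0)^{−1} is independent of i for 1 ≤ i ≤ d. Moreover, if (i)–(iv) hold, then (i) is satisfied with ξ equal to the common value of (θ*_{d−i} − θ*_d)(θ_i − θ_0)^{−1}, ζ = θ*_d − ξθ_0, ξ* = ξ^{−1}, and ζ* = θ_0 − ξ*θ*_d. -/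
section AffineAux

variable {K : Type*} [Field K]

private def chebU (β : K) : ℕ → K
  | 0 => 0
  | 1 => 1
  | (n+2) => β * chebU β (n+1) - chebU β n

private def uSum (β : K) (n : ℕ) : K := ∑ k ∈ Finset.range n, chebU β k

private lemma uSum_succ (β : K) (n : ℕ) : uSum β (n+1) = uSum β n + chebU β n :=
  Finset.sum_range_succ _ _

private lemma cheb_M (β : K) :
    ∀ n, chebU β (n+1) - chebU β n - (β - 2) * uSum β (n+1) = 1 := by
  intro n
  induction n with
  | zero => simp [chebU, uSum]
  | succ n ih =>
    rw [show n+1+1 = n+2 from rfl, chebU, uSum_succ]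
    linear_combination ih

private lemma cheb_key (β : K) :
    ∀ n, uSum β (n+2) * uSum β n = uSum β (n+1) * uSum β (n+1) - uSum β (n+1) := by
  intro n
  induction n with
  | zero => simp [uSum, chebU, Finset.sum_range_succ]
  | succ n ih =>
    have hM1 := cheb_M β (n+1)
    have hM0 := cheb_M β n
    have e1 := uSum_succ β n
    simp only [show n+1+2 = n+2+1 from rfl, show n+1+1 = n+2 from rfl] at hM1 ⊢
    rw [uSum_succ β (n+2)]
    rw [uSum_succ β (n+1)] at ih hM1 ⊢
    rw [show n+2 = n+1+1 from rfl, chebU] at hM1 ⊢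
    linear_combination ih + chebU β (n+1) * hM1 - 2*chebU β (n+1) * hM0
      + (uSum β (n+1) + chebU β (n+1)) * e1

private lemma sum_refl_zero (d : ℕ) (θ : ℕ → K) :
    ∑ h ∈ Finset.range (d+1), (θ h - θ (d - h)) = 0 := by
  apply Finset.sum_involution (g := fun a _ => d - a)
  · intro a ha
    have : d - (d - a) = a := by
      have := Finset.mem_range.1 ha; omega
    rw [this]; ring
  · intro a ha hne h
    apply hne
    rw [← h]
    have : d - (d - a) = a := by have := Finset.mem_range.1 ha; omega
    rw [this, h, sub_self]
  · intro a _; exact Finset.mem_range.2 (by omega)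
  · intro a ha
    have := Finset.mem_range.1 ha; omega

private lemma sum_sym (d : ℕ) (θ : ℕ → K) (i : ℕ) (h2 : i ≤ d) :
    (∑ h ∈ Finset.range i, (θ h - θ (d - h)) / (θ 0 - θ d))
      = ∑ h ∈ Finset.range (d - i + 1), (θ h - θ (d - h)) / (θ 0 - θ d) := by
  have key : (∑ h ∈ Finset.range i, (θ h - θ (d - h)))
      = ∑ h ∈ Finset.range (d - i + 1), (θ h - θ (d - h)) := by
    have hfull := sum_refl_zero d θ
    rw [show d + 1 = (d - i + 1) + i by omega, Finset.sum_range_add] at hfull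
    have hrefl : (∑ k ∈ Finset.range i, (θ (d - i + 1 + k) - θ (d - (d - i + 1 + k))))
        = - ∑ h ∈ Finset.range i, (θ h - θ (d - h)) := by
      rw [← Finset.sum_range_reflect (fun k => θ (d - i + 1 + k) - θ (d - (d - i + 1 + k))) i,
        ← Finset.sum_neg_distrib]
      apply Finset.sum_congr rfl
      intro j hj
      have hj' := Finset.mem_range.1 hj
      have e1 : d - i + 1 + (i - 1 - j) = d - j := by omega
      have e2 : d - (d - j) = j := by omega
      rw [e1, e2]; ring
    rw [hrefl] at hfull
    linear_combination -hfull
  rw [← Finset.sum_div, ← Finset.sum_div, key]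

private lemma affine_of_bracket (d : ℕ) (hd : 1 ≤ d) (θ θs : ℕ → K)
    (hdist : ∀ i j, i ≤ d → j ≤ d → i ≠ j → θ i ≠ θ j ∧ θs i ≠ θs j)
    (pa5 : ∀ i j, 2 ≤ i → i ≤ d - 1 → 2 ≤ j → j ≤ d - 1 →
      (θ (i - 2) - θ (i + 1)) / (θ (i - 1) - θ i)
        = (θs (i - 2) - θs (i + 1)) / (θs (i - 1) - θs i) ∧
      (θ (i - 2) - θ (i + 1)) / (θ (i - 1) - θ i)
        = (θ (j - 2) - θ (j + 1)) / (θ (j - 1) - θ j))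
    (hbr : (θs 1 - θs 0) * (θ 0 - θ d) = (θs d - θs 0) * (θ (d-1) - θ d)) :
    ∀ i ≤ d, (θs (d - i) - θs d) * (θ d - θ 0) = (θs 0 - θs d) * (θ i - θ 0) := by
  have hθne : ∀ a b : ℕ, a ≤ d → b ≤ d → a ≠ b → θ a - θ b ≠ 0 := fun a b ha hb hab =>
    sub_ne_zero.2 (hdist a b ha hb hab).1
  have hθsne : ∀ a b : ℕ, a ≤ d → b ≤ d → a ≠ b → θs a - θs b ≠ 0 := fun a b ha hb hab =>
    sub_ne_zero.2 (hdist a b ha hb hab).2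
  intro i hi
  by_cases hi0 : i = 0
  · subst hi0; simp
  by_cases hid : i = d
  · subst hid; rw [Nat.sub_self]
  have h1i : 1 ≤ i := by omega
  have hiD : i ≤ d - 1 := by omega
  have hd2 : 2 ≤ d := by omega
  by_cases hdd : d = 2
  · subst hdd
    have : i = 1 := by omega
    subst this
    norm_num at hbr ⊢
    linear_combination -hbr
  have hd3 : 3 ≤ d := by omega
  have h12 : θ 1 - θ 2 ≠ 0 := hθne 1 2 (by omega) (by omega) (by omega)
  set γ : K := (θ 0 - θ 3) / (θ 1 - θ 2) with hγ
  have recθ : ∀ k, k + 3 ≤ d → θ k - θ (k+3) = γ * (θ (k+1) - θ (k+2)) := by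
    intro k hk
    have h5 := (pa5 (k+2) 2 (by omega) (by omega) (by omega) (by omega)).2
    have e1 : k+2-2 = k := by omega
    have e2 : k+2-1 = k+1 := by omega
    have e3 : k+2+1 = k+3 := by omega
    have e4 : (2:ℕ)-2 = 0 := by omega
    have e5 : (2:ℕ)-1 = 1 := by omega
    have e6 : (2:ℕ)+1 = 3 := by omega
    rw [e1, e2, e3, e4, e5, e6] at h5
    rw [hγ, ← h5, div_mul_cancel₀]
    exact hθne (k+1) (k+2) (by omega) (by omega) (by omega)
  have recθs : ∀ k, k + 3 ≤ d → θs k - θs (k+3) = γ * (θs (k+1) - θs (k+2)) := by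
    intro k hk
    have h5 := pa5 (k+2) 2 (by omega) (by omega) (by omega) (by omega)
    have hs := h5.1.symm.trans h5.2
    have e1 : k+2-2 = k := by omega
    have e2 : k+2-1 = k+1 := by omega
    have e3 : k+2+1 = k+3 := by omega
    have e4 : (2:ℕ)-2 = 0 := by omega
    have e5 : (2:ℕ)-1 = 1 := by omega
    have e6 : (2:ℕ)+1 = 3 := by omega
    rw [e1, e2, e3, e4, e5, e6] at hs
    rw [hγ, ← hs, div_mul_cancel₀]
    exact hθsne (k+1) (k+2) (by omega) (by omega) (by omega)
  set β : K := γ - 1 with hβ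
  set Δ : ℕ → K := fun k => θ (k+1) - θ k with hΔ
  set E : ℕ → K := fun k => θs (d - k - 1) - θs (d - k) with hEdef
  have hΔne : ∀ k, k + 1 ≤ d → Δ k ≠ 0 := fun k hk =>
    hθne (k+1) k hk (by omega) (by omega)
  have recΔ : ∀ k, k + 3 ≤ d → Δ (k+2) = β * Δ (k+1) - Δ k := by
    intro k hk
    have h := recθ k hk
    simp only [hΔ, hβ]
    linear_combination -h
  have recE : ∀ k, k + 3 ≤ d → E (k+2) = β * E (k+1) - E k := by
    intro k hk
    obtain ⟨m, hm⟩ : ∃ m, d = k + 3 + m := ⟨d - (k+3), by omega⟩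
    have h := recθs m (by omega)
    simp only [hEdef, hβ]
    rw [show d - (k+2) - 1 = m by omega, show d - (k+2) = m+1 by omega,
      show d - (k+1) - 1 = m+1 by omega, show d - (k+1) = m+2 by omega,
      show d - k - 1 = m+2 by omega, show d - k = m+3 by omega]
    linear_combination h
  have Δexp : ∀ k, k + 2 ≤ d → Δ (k+1) = chebU β (k+1) * Δ 1 - chebU β k * Δ 0 := by
    intro k
    induction k using Nat.strong_induction_on with
    | _ k ih =>
      rcases k with _ | _ | k
      · intro _; simp [chebU]
      · intro hk
        have hr := recΔ 0 (by omega)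
        have c2 : chebU β 2 = β := by
          show chebU β (0+2) = β; rw [chebU]; simp [chebU]
        rw [show (1:ℕ)+1 = 2 from rfl, c2, hr]
        simp [chebU]
      · intro hk
        have h1 := ih (k+1) (by omega) (by omega)
        have h0 := ih k (by omega) (by omega)
        have hr := recΔ (k+1) (by omega)
        have hc : chebU β (k+3) = β * chebU β (k+2) - chebU β (k+1) := by
          rw [show k+3 = (k+1)+2 from rfl, chebU]
        have hc2 : chebU β (k+2) = β * chebU β (k+1) - chebU β k := by rw [chebU]
        rw [show k+2+1 = k+3 from rfl]
        linear_combination hr + β * h1 - h0 - Δ 1 * hc + Δ 0 * hc2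
  have θexp : ∀ j, j + 1 ≤ d → θ (j+1) - θ 0 = uSum β (j+1) * Δ 1 + (1 - uSum β j) * Δ 0 := by
    intro j
    induction j with
    | zero =>
      intro _
      simp only [hΔ]
      simp [uSum, chebU]
    | succ j ih =>
      intro h
      have hih := ih (by omega)
      have hD := Δexp j (by omega)
      have eΔ : Δ (j+1) = θ (j+2) - θ (j+1) := rfl
      have s2 : uSum β (j+2) = uSum β (j+1) + chebU β (j+1) := uSum_succ β (j+1)
      have s1 : uSum β (j+1) = uSum β j + chebU β j := uSum_succ β j
      rw [show j+1+1 = j+2 from rfl]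
      linear_combination hih + hD - eΔ - Δ 1 * s2 + Δ 0 * s1
  have hUd : uSum β d ≠ 0 := by
    intro h0
    obtain ⟨m, hm⟩ : ∃ m, d = m + 3 := ⟨d - 3, by omega⟩
    have hkey := cheb_key β (m+1)
    rw [show m+1+2 = m+3 from rfl, show m+1+1 = m+2 from rfl, ← hm, h0] at hkey
    have h2 : uSum β (m+2) * (uSum β (m+2) - 1) = 0 := by linear_combination -hkey
    have hθd := θexp (m+2) (by omega)
    rw [show m+2+1 = m+3 from rfl, ← hm, h0] at hθd
    rcases mul_eq_zero.1 h2 with hU | hU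
    · have hcol : θ d = θ 1 := by
        have e1 : θ 1 - θ 0 = Δ 0 := rfl
        rw [hU] at hθd
        linear_combination hθd - e1
      exact (hdist d 1 (le_refl d) (by omega) (by omega)).1 hcol
    · have hcol : θ d = θ 0 := by
        have hU' : uSum β (m+2) = 1 := by linear_combination hU
        rw [hU'] at hθd
        linear_combination hθd
      exact (hdist d 0 (le_refl d) (by omega) (by omega)).1 hcol
  have WrC : ∀ k, k + 3 ≤ d →
      E (k+1) * Δ (k+2) - E (k+2) * Δ (k+1) = E k * Δ (k+1) - E (k+1) * Δ k := by
    intro k hk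
    have h1 := recΔ k hk
    have h2 := recE k hk
    linear_combination E (k+1) * h1 - Δ (k+1) * h2
  have WrAll : ∀ k, k + 2 ≤ d → E k * Δ (k+1) - E (k+1) * Δ k = E 0 * Δ 1 - E 1 * Δ 0 := by
    intro k
    induction k with
    | zero => intro _; rfl
    | succ k ih =>
      intro hk
      rw [show k+1+1 = k+2 from rfl, WrC k (by omega)]
      exact ih (by omega)
  set W : K := E 0 * Δ 1 - E 1 * Δ 0 with hWdef
  have gLem : ∀ k, k ≤ d - 1 →
      E (d-1) * Δ (d-1-k) - E (d-1-k) * Δ (d-1) = -W * chebU β k := by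
    intro k
    induction k using Nat.strong_induction_on with
    | _ k ih =>
      rcases k with _ | _ | k
      · intro _; simp [chebU]
      · intro hk
        have hw := WrAll (d-2) (by omega)
        rw [show d-2+1 = d-1 by omega] at hw
        rw [show d-1-1 = d-2 by omega]
        have c1 : chebU β 1 = 1 := rfl
        rw [c1, hWdef]
        linear_combination -hw
      · intro hk
        have h1 := ih (k+1) (by omega) (by omega)
        have h0 := ih k (by omega) (by omega)
        have hrΔ := recΔ (d-k-3) (by omega)
        have hrE := recE (d-k-3) (by omega)
        rw [show d-k-3+2 = d-1-k by omega, show d-k-3+1 = d-1-(k+1) by omega] at hrΔ hrE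
        have hc : chebU β (k+2) = β * chebU β (k+1) - chebU β k := by rw [chebU]
        rw [show d-1-(k+2) = d-k-3 by omega, hc]
        linear_combination β * h1 - h0 + E (d-1) * hrΔ - Δ (d-1) * hrE
  have sumΔ : ∀ n, n ≤ d → ∑ k ∈ Finset.range n, Δ k = θ n - θ 0 := by
    intro n _
    simp only [hΔ]
    exact Finset.sum_range_sub θ n
  have sumE : ∀ n, n ≤ d → ∑ k ∈ Finset.range n, E k = θs (d - n) - θs d := by
    intro n hn
    have := Finset.sum_range_sub (fun j => θs (d - j)) n
    simp only [hEdef, Nat.sub_sub] at this ⊢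
    rw [this, Nat.sub_zero]
  have sumΔrev : ∑ k ∈ Finset.range d, Δ (d-1-k) = θ d - θ 0 := by
    rw [Finset.sum_range_reflect (fun k => Δ k) d]
    exact sumΔ d (le_refl d)
  have sumErev : ∑ k ∈ Finset.range d, E (d-1-k) = θs 0 - θs d := by
    rw [Finset.sum_range_reflect (fun k => E k) d]
    have := sumE d (le_refl d)
    rw [Nat.sub_self] at this
    exact this
  have hsum : E (d-1) * (θ d - θ 0) - (θs 0 - θs d) * Δ (d-1) = -W * uSum β d := by
    have hcong : ∑ k ∈ Finset.range d, (E (d-1) * Δ (d-1-k) - E (d-1-k) * Δ (d-1))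
        = ∑ k ∈ Finset.range d, (-W * chebU β k) :=
      Finset.sum_congr rfl (fun k hk => gLem k (by have := Finset.mem_range.1 hk; omega))
    rw [Finset.sum_sub_distrib, ← Finset.mul_sum, ← Finset.sum_mul, sumΔrev, sumErev,
      ← Finset.mul_sum] at hcong
    exact hcong
  have hbr' : E (d-1) * (θ d - θ 0) - (θs 0 - θs d) * Δ (d-1) = 0 := by
    have eE : E (d-1) = θs 0 - θs 1 := by
      simp only [hEdef]
      rw [show d-(d-1)-1 = 0 by omega, show d-(d-1) = 1 by omega]
    have eD : Δ (d-1) = θ d - θ (d-1) := by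
      simp only [hΔ]
      rw [show d-1+1 = d by omega]
    rw [eE, eD]
    linear_combination hbr
  have hW0 : W = 0 := by
    have h := hbr'.symm.trans hsum
    rcases mul_eq_zero.1 h.symm with h' | h'
    · exact neg_eq_zero.1 h'
    · exact absurd h' hUd
  have prop : ∀ k, k + 1 ≤ d → E k * Δ 0 = E 0 * Δ k := by
    intro k
    induction k with
    | zero => intro _; rfl
    | succ k ih =>
      intro hk
      have hw := WrAll k (by omega)
      rw [hW0] at hw
      have hihe := ih (by omega)
      have hdk : Δ k ≠ 0 := hΔne k (by omega)
      have h2 : (E (k+1) * Δ 0) * Δ k = (E 0 * Δ (k+1)) * Δ k := by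
        linear_combination -Δ 0 * hw + Δ (k+1) * hihe
      exact mul_right_cancel₀ hdk h2
  have main : ∀ n, n ≤ d → (θs (d - n) - θs d) * Δ 0 = E 0 * (θ n - θ 0) := by
    intro n hn
    rw [← sumΔ n hn, ← sumE n hn, Finset.sum_mul, Finset.mul_sum]
    exact Finset.sum_congr rfl (fun k hk =>
      prop k (by have := Finset.mem_range.1 hk; omega))
  have hmi := main i hi
  have hmd := main d (le_refl d)
  rw [Nat.sub_self] at hmd
  have hD0 : Δ 0 ≠ 0 := hΔne 0 (by omega)
  have h2 : ((θs (d - i) - θs d) * (θ d - θ 0)) * Δ 0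
      = ((θs 0 - θs d) * (θ i - θ 0)) * Δ 0 := by
    linear_combination (θ d - θ 0) * hmi - (θ i - θ 0) * hmd
  exact mul_right_cancel₀ hD0 h2

end AffineAux

/-- Characterization of when the relative `P^↓⇓*` is affine isomorphic to `P`. -/
theorem downDownstar_affine_iso {K : Type*} [Field K] (d : ℕ) (hd : 1 ≤ d)
    (θ θs φ ϕ : ℕ → K) (hPA : IsParamArray K d θ θs φ ϕ) :
    -- (i) ↔ (ii)
    ((∃ ξ ζ ξs ζs : K, ξ ≠ 0 ∧ ξs ≠ 0 ∧
        (∀ i ≤ d, θs (d - i) = ξ * θ i + ζ ∧ θ (d - i) = ξs * θs i + ζs) ∧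
        (∀ i, 1 ≤ i → i ≤ d → φ (d - i + 1) = ξ * ξs * φ i ∧ ϕ i = ξ * ξs * ϕ i))
      ↔ φ 1 = φ d) ∧
    -- (ii) ↔ (iii)
    ((φ 1 = φ d) ↔ (∀ i, 1 ≤ i → i ≤ d → φ i = φ (d - i + 1))) ∧
    -- (ii) ↔ (iv)
    ((φ 1 = φ d) ↔
      (∀ i j, 1 ≤ i → i ≤ d → 1 ≤ j → j ≤ d →
        (θs (d - i) - θs d) * (θ i - θ 0)⁻¹ = (θs (d - j) - θs d) * (θ j - θ 0)⁻¹)) ∧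
    -- moreover: (i) is satisfied with ξ the common value of
    -- (θ*_{d−i} − θ*_d)(θ_i − θ_0)⁻¹, ζ = θ*_d − ξθ_0, ξ* = ξ⁻¹, ζ* = θ_0 − ξ*θ*_d
    ((φ 1 = φ d) →
      ∃ ξ ζ ξs ζs : K,
        ξ = (θs 0 - θs d) * (θ d - θ 0)⁻¹ ∧ ζ = θs d - ξ * θ 0 ∧
        ξs = ξ⁻¹ ∧ ζs = θ 0 - ξs * θs d ∧
        ξ ≠ 0 ∧ ξs ≠ 0 ∧
        (∀ i ≤ d, θs (d - i) = ξ * θ i + ζ ∧ θ (d - i) = ξs * θs i + ζs) ∧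
        (∀ i, 1 ≤ i → i ≤ d → φ (d - i + 1) = ξ * ξs * φ i ∧ ϕ i = ξ * ξs * ϕ i)) := by
  obtain ⟨pa1, pa2, pa3, pa4, pa5⟩ := hPA
  have hθne : ∀ a b : ℕ, a ≤ d → b ≤ d → a ≠ b → θ a - θ b ≠ 0 := fun a b ha hb hab =>
    sub_ne_zero.2 (pa2 a b ha hb hab).1
  have hθsne : ∀ a b : ℕ, a ≤ d → b ≤ d → a ≠ b → θs a - θs b ≠ 0 := fun a b ha hb hab =>
    sub_ne_zero.2 (pa2 a b ha hb hab).2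
  have hS1 : (∑ h ∈ Finset.range 1, (θ h - θ (d - h)) / (θ 0 - θ d)) = 1 := by
    rw [Finset.sum_range_one, Nat.sub_zero]
    exact div_self (hθne 0 d (by omega) (le_refl d) (by omega))
  have hSd : (∑ h ∈ Finset.range d, (θ h - θ (d - h)) / (θ 0 - θ d)) = 1 := by
    have h := sum_sym d θ 1 hd
    rw [show d - 1 + 1 = d by omega] at h
    rw [← h, hS1]
  -- the key construction
  have hE : φ 1 = φ d →
      ∃ ξ ζ ξs ζs : K,
        ξ = (θs 0 - θs d) * (θ d - θ 0)⁻¹ ∧ ζ = θs d - ξ * θ 0 ∧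
        ξs = ξ⁻¹ ∧ ζs = θ 0 - ξs * θs d ∧
        ξ ≠ 0 ∧ ξs ≠ 0 ∧
        (∀ i ≤ d, θs (d - i) = ξ * θ i + ζ ∧ θ (d - i) = ξs * θs i + ζs) ∧
        (∀ i, 1 ≤ i → i ≤ d → φ (d - i + 1) = ξ * ξs * φ i ∧ ϕ i = ξ * ξs * ϕ i) := by
    intro h
    set c : K := (θs 0 - θs d) * (θ d - θ 0)⁻¹ with hc
    have hbr : (θs 1 - θs 0) * (θ 0 - θ d) = (θs d - θs 0) * (θ (d-1) - θ d) := by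
      have e1 := pa3 1 (le_refl 1) hd
      have e2 := pa3 d hd (le_refl d)
      rw [hS1] at e1
      rw [hSd] at e2
      rw [show (1:ℕ) - 1 = 0 by omega] at e1
      linear_combination -e1 + e2 + h
    have hθd0 : θ d - θ 0 ≠ 0 := hθne d 0 (le_refl d) (by omega) (by omega)
    have hc0 : c ≠ 0 :=
      mul_ne_zero (hθsne 0 d (by omega) (le_refl d) (by omega)) (inv_ne_zero hθd0)
    have haff := affine_of_bracket d hd θ θs pa2 pa5 hbr
    have haffc : ∀ i ≤ d, θs (d - i) - θs d = c * (θ i - θ 0) := by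
      intro i hi
      have h' := haff i hi
      rw [hc]
      field_simp
      linear_combination h'
    refine ⟨c, θs d - c * θ 0, c⁻¹, θ 0 - c⁻¹ * θs d, rfl, rfl, rfl, rfl, hc0,
      inv_ne_zero hc0, ?_, ?_⟩
    · intro i hi
      constructor
      · have h' := haffc i hi; linear_combination h'
      · have h2 := haffc (d - i) (by omega)
        rw [show d - (d - i) = i by omega] at h2
        field_simp
        linear_combination -h2
    · intro i h1 h2
      have hone : c * c⁻¹ = 1 := mul_inv_cancel₀ hc0
      constructor
      · rw [hone, one_mul]
        have p1 := pa3 i h1 h2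
        have p2 := pa3 (d-i+1) (by omega) (by omega)
        have hsym := sum_sym d θ i h2
        rw [show d - i + 1 - 1 = d - i by omega] at p2
        have q1 := haffc (i-1) (by omega)
        rw [show d - (i-1) = d - i + 1 by omega] at q1
        have qd := haffc d (le_refl d)
        rw [Nat.sub_self] at qd
        have q2 := haffc (d-i) (by omega)
        rw [show d - (d-i) = i by omega] at q2
        rw [p2, p1, ← hsym]
        linear_combination (θ (d-i) - θ d) * (q1 - qd) - (θ (i-1) - θ d) * (q2 - qd)
      · rw [hone, one_mul]
  refine ⟨⟨?_, fun h => ?_⟩, ⟨fun h i h1 h2 => ?_, fun h => ?_⟩, ⟨fun h => ?_, fun h => ?_⟩, hE⟩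
  · -- (i) → (ii)
    rintro ⟨ξ, ζ, ξs, ζs, hξ, hξs, hθaff, hfp⟩
    have h1 := (hfp 1 (le_refl 1) hd).1
    have h2 := (hfp 1 (le_refl 1) hd).2
    have hone : ξ * ξs = 1 := by
      have hϕ1 : ϕ 1 ≠ 0 := (pa1 1 (le_refl 1) hd).2
      have hz : (ξ * ξs - 1) * ϕ 1 = 0 := by linear_combination -h2
      rcases mul_eq_zero.1 hz with h' | h'
      · exact sub_eq_zero.1 h'
      · exact absurd h' hϕ1
    rw [show d - 1 + 1 = d by omega, hone, one_mul] at h1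
    exact h1.symm
  · -- (ii) → (i)
    obtain ⟨ξ, ζ, ξs, ζs, _, _, _, _, hξ, hξs, hθaff, hfp⟩ := hE h
    exact ⟨ξ, ζ, ξs, ζs, hξ, hξs, hθaff, hfp⟩
  · -- (ii) → (iii)
    obtain ⟨ξ, ζ, ξs, ζs, hξv, hζv, hξsv, hζsv, hξ, hξs, hθaff, hfp⟩ := hE h
    have h' := (hfp i h1 h2).1
    rw [hξsv, mul_inv_cancel₀ hξ, one_mul] at h'
    exact h'.symm
  · -- (iii) → (ii)
    have h' := h 1 (le_refl 1) hd
    rw [show d - 1 + 1 = d by omega] at h'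
    exact h'
  · -- (ii) → (iv)
    obtain ⟨ξ, ζ, ξs, ζs, hξv, hζv, hξsv, hζsv, hξ, hξs, hθaff, hfp⟩ := hE h
    intro i j h1i h2i h1j h2j
    have a0 : θs d = ξ * θ 0 + ζ := by
      have := (hθaff 0 (Nat.zero_le d)).1
      rwa [Nat.sub_zero] at this
    have key : ∀ m, 1 ≤ m → m ≤ d → (θs (d-m) - θs d) * (θ m - θ 0)⁻¹ = ξ := by
      intro m hm1 hm2
      have am := (hθaff m hm2).1
      have hne : θ m - θ 0 ≠ 0 := hθne m 0 hm2 (Nat.zero_le d) (by omega)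
      have e : θs (d-m) - θs d = ξ * (θ m - θ 0) := by rw [am, a0]; ring
      rw [e, mul_assoc, mul_inv_cancel₀ hne, mul_one]
    rw [key i h1i h2i, key j h1j h2j]
  · -- (iv) → (ii)
    by_cases hd1 : d = 1
    · subst hd1; rfl
    have hθd0 : θ d - θ 0 ≠ 0 := hθne d 0 (le_refl d) (by omega) (by omega)
    have key : ∀ m, 1 ≤ m → m ≤ d →
        θs (d-m) - θs d = (θs 0 - θs d) * (θ d - θ 0)⁻¹ * (θ m - θ 0) := by
      intro m hm1 hm2
      have h' := h m d hm1 hm2 hd (le_refl d)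
      rw [Nat.sub_self] at h'
      have hne : θ m - θ 0 ≠ 0 := hθne m 0 hm2 (Nat.zero_le d) (by omega)
      have e : (θs (d-m) - θs d) = ((θs (d-m) - θs d) * (θ m - θ 0)⁻¹) * (θ m - θ 0) := by
        field_simp
      rw [e, h']
    have q1 := key (d-1) (by omega) (by omega)
    rw [show d - (d-1) = 1 by omega] at q1
    have qd := key d hd (le_refl d)
    rw [Nat.sub_self] at qd
    have e1 := pa3 1 (le_refl 1) hd
    have e2 := pa3 d hd (le_refl d)
    rw [hS1, show (1:ℕ) - 1 = 0 by omega] at e1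
    rw [hSd] at e2
    rw [e1, e2]
    linear_combination (θ 0 - θ d) * q1 + (θ (d-1) - θ 0) * qd
end
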